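/- arXiv:1006.3487 — 5 statements merged into one kernel-verified Lean document; each statement's English description precedes it below -/
import Mathlib

section
/- Let t and t' be two triangulations of a convex (n+3)-gon Q that differ by a flip: t' = (t \ {δ}) ∪ {δ'} where δ = {a,c} and δ' = {b,d} are crossing diagonals with a,b,c,d in cyclic order. Then the vector v(t') − v(t) ∈ ℝ^{n+3} is nonzero exactly in the four coordinates a, b, c, d. -/
open Finset

/-- Cyclic adjacency of vertex labels of the convex `m`-gon. -/
def adjacent (m : ℕ) (a b : Fin m) : Prop :=
  (a.val + 1) % m = b.val ∨ (b.val + 1) % m = a.val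

/-- A diagonal of the labeled `m`-gon: an unordered pair of distinct,
non cyclically adjacent labels. -/
def IsDiagonal (m : ℕ) (d : Finset (Fin m)) : Prop :=
  ∃ a b : Fin m, a ≠ b ∧ ¬ adjacent m a b ∧ d = {a, b}

/-- Two diagonals cross iff their endpoints alternate in cyclic order
(equivalently, exactly one endpoint of the second lies strictly between
the two endpoints of the first). -/
def Crosses (m : ℕ) (d e : Finset (Fin m)) : Prop :=
  ∃ p q r s : Fin m, p < q ∧ q < r ∧ r < s ∧
    ((d = {p, r} ∧ e = {q, s}) ∨ (d = {q, s} ∧ e = {p, r}))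

/-- A triangulation: a maximal set of pairwise non-crossing diagonals. -/
def IsTriangulation (m : ℕ) (t : Finset (Finset (Fin m))) : Prop :=
  (∀ d ∈ t, IsDiagonal m d) ∧
  (∀ d ∈ t, ∀ e ∈ t, ¬ Crosses m d e) ∧
  (∀ d, IsDiagonal m d → (∀ e ∈ t, ¬ Crosses m d e) → d ∈ t)

/-- The pair `{a, b}` is a polygon edge (cyclically adjacent labels) or a
diagonal belonging to `t`. -/
def edgeOrDiag (m : ℕ) (t : Finset (Finset (Fin m))) (a b : Fin m) : Prop :=
  adjacent m a b ∨ ({a, b} : Finset (Fin m)) ∈ t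

/-- Area of the triangle with vertices `p`, `q`, `r` in the plane. -/
noncomputable def triArea (p q r : ℝ × ℝ) : ℝ :=
  |(q.1 - p.1) * (r.2 - p.2) - (r.1 - p.1) * (q.2 - p.2)| / 2

open Classical in
/-- The GKZ vector of a triangulation `t`: its `i`-th coordinate is the sum of
the areas of the triangles of `t` containing the vertex `i`. -/
noncomputable def gkz (m : ℕ) (q : Fin m → ℝ × ℝ) (t : Finset (Finset (Fin m))) :
    Fin m → ℝ := fun i =>
  ∑ a : Fin m, ∑ b : Fin m, ∑ c : Fin m,
    if a < b ∧ b < c ∧ edgeOrDiag m t a b ∧ edgeOrDiag m t b c ∧ edgeOrDiag m t a c ∧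
        (i = a ∨ i = b ∨ i = c)
    then triArea (q a) (q b) (q c) else 0

/-- The points `q 0, …, q (m-1)` are in strictly convex position, labeled
counterclockwise: every triple of labels in increasing order is positively oriented. -/
def ConvexCCW (m : ℕ) (q : Fin m → ℝ × ℝ) : Prop :=
  ∀ i j k : Fin m, i < j → j < k →
    0 < ((q j).1 - (q i).1) * ((q k).2 - (q i).2) -
        ((q k).1 - (q i).1) * ((q j).2 - (q i).2)

/-- The secondary polytope of the convex polygon with vertices `q`. -/
noncomputable def secondary (m : ℕ) (q : Fin m → ℝ × ℝ) : Set (Fin m → ℝ) :=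
  convexHull ℝ {v | ∃ t, IsTriangulation m t ∧ v = gkz m q t}

def dot {k : ℕ} (w x : Fin k → ℝ) : ℝ := ∑ i, w i * x i

/-- The set of points of `P` maximizing the linear functional `⟨w, ·⟩`. -/
def maxFace {k : ℕ} (P : Set (Fin k → ℝ)) (w : Fin k → ℝ) : Set (Fin k → ℝ) :=
  {x ∈ P | ∀ y ∈ P, dot w y ≤ dot w x}

/-- A face of `P`: the set of points of `P` maximizing some linear functional. -/
def IsFaceOf {k : ℕ} (P F : Set (Fin k → ℝ)) : Prop :=
  ∃ w : Fin k → ℝ, F = maxFace P w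

/-- Linear span of the difference set of `F`. -/
def spanDiff {k : ℕ} (F : Set (Fin k → ℝ)) : Submodule ℝ (Fin k → ℝ) :=
  Submodule.span ℝ {z | ∃ u ∈ F, ∃ v ∈ F, z = u - v}

/-- Dimension of a set: the rank of the span of its difference set. -/
noncomputable def dimOf {k : ℕ} (F : Set (Fin k → ℝ)) : ℕ :=
  Module.finrank ℝ (spanDiff F)

/-- A facet: a face of dimension one less than the polytope. -/
def IsFacetOf {k : ℕ} (P F : Set (Fin k → ℝ)) : Prop :=
  IsFaceOf P F ∧ dimOf F + 1 = dimOf P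

/-- Two facets are parallel if the linear spans of their difference sets coincide. -/
def ParallelFaces {k : ℕ} (F F' : Set (Fin k → ℝ)) : Prop :=
  spanDiff F = spanDiff F'

/-- A vertex of `P`. -/
def vertexOf {k : ℕ} (P : Set (Fin k → ℝ)) (v : Fin k → ℝ) : Prop :=
  v ∈ P ∧ IsFaceOf P {v}

/-- The standard basis vector `e i` of `ℝ^k`. -/
noncomputable def eVec {k : ℕ} (i : Fin k) : Fin k → ℝ := Pi.single i 1

/-- The simple root `α i = e i − e (i+1)` of type `A n`. -/
noncomputable def simpleRoot (n : ℕ) (i : Fin n) : Fin (n+1) → ℝ :=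
  eVec i.castSucc - eVec i.succ

/-- Almost positive roots of type `A n`: positive roots together with the
negatives of the simple roots. -/
def AlmostPositive (n : ℕ) (β : Fin (n+1) → ℝ) : Prop :=
  (∃ i j : Fin (n+1), i < j ∧ β = eVec i - eVec j) ∨ (∃ i : Fin n, β = -simpleRoot n i)

/-- The `i`-th snake diagonal `δ_i = {⌈(i+1)/2⌉, n+2−⌊(i+1)/2⌋}` of the
`(n+3)`-gon (here `i : Fin n` is `0`-based). -/
def snake (n : ℕ) (i : Fin n) : Finset (Fin (n+3)) :=
  {⟨(i.val + 2) / 2, by have := i.isLt; omega⟩, ⟨n + 2 - (i.val + 1) / 2, by omega⟩}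

/-- The correspondence between almost positive roots and diagonals of the
`(n+3)`-gon: `−α i` corresponds to the snake diagonal `δ i`, and the positive
root `α i + ⋯ + α j = e i − e (j+1)` corresponds to the unique diagonal crossing
exactly the snake diagonals `δ i, …, δ j`. -/
def RootDiag (n : ℕ) (β : Fin (n+1) → ℝ) (d : Finset (Fin (n+3))) : Prop :=
  (∃ i : Fin n, β = -simpleRoot n i ∧ d = snake n i) ∨
  (∃ i j : Fin n, i ≤ j ∧ β = eVec i.castSucc - eVec j.succ ∧ IsDiagonal (n+3) d ∧
    ∀ k : Fin n, (Crosses (n+3) d (snake n k) ↔ i ≤ k ∧ k ≤ j))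

/-- Two almost positive roots are compatible if their corresponding diagonals
do not cross. -/
def Compatible (n : ℕ) (β γ : Fin (n+1) → ℝ) : Prop :=
  ∀ d e : Finset (Fin (n+3)), RootDiag n β d → RootDiag n γ e → ¬ Crosses (n+3) d e

/-- A cluster of type `A n`: a maximal set of pairwise compatible almost
positive roots. -/
def IsCluster (n : ℕ) (C : Finset (Fin (n+1) → ℝ)) : Prop :=
  (∀ β ∈ C, AlmostPositive n β) ∧
  (∀ β ∈ C, ∀ γ ∈ C, Compatible n β γ) ∧
  (∀ β, AlmostPositive n β → (∀ γ ∈ C, Compatible n β γ) → β ∈ C)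

/-- The cone of nonnegative linear combinations of the elements of `C`. -/
def coneOf (n : ℕ) (C : Finset (Fin (n+1) → ℝ)) : Set (Fin (n+1) → ℝ) :=
  {x | ∃ c : (Fin (n+1) → ℝ) → ℝ, (∀ β ∈ C, 0 ≤ c β) ∧ x = ∑ β ∈ C, c β • β}

/-- The normal cone of `P` at `v`, taken within the hyperplane
`H = {x : ∑ i, x i = 0}`. -/
def normalConeIn (n : ℕ) (P : Set (Fin (n+1) → ℝ)) (v : Fin (n+1) → ℝ) :
    Set (Fin (n+1) → ℝ) :=
  {w | (∑ i, w i = 0) ∧ ∀ x ∈ P, dot w x ≤ dot w v}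

/-- A cluster-fan polytope of type `A n`: a polytope contained in the
hyperplane `H`, of dimension `n`, whose vertex normal cones within `H` are
exactly the cones spanned by the clusters of type `A n`. -/
def IsClusterFanPolytope (n : ℕ) (P : Set (Fin (n+1) → ℝ)) : Prop :=
  (∃ V : Finset (Fin (n+1) → ℝ), P = convexHull ℝ (V : Set (Fin (n+1) → ℝ))) ∧
  (∀ x ∈ P, ∑ i, x i = 0) ∧
  dimOf P = n ∧
  {S : Set (Fin (n+1) → ℝ) | ∃ v, vertexOf P v ∧ S = normalConeIn n P v} =
    {S : Set (Fin (n+1) → ℝ) |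
      ∃ C : Finset (Fin (n+1) → ℝ), IsCluster n C ∧ S = coneOf n C}

/-- The simplex `Δ_{[i,…,j]} = conv{e i, …, e j} ⊂ ℝ^{n+1}`. -/
noncomputable def stdSimplexSeg (n : ℕ) (i j : Fin (n+1)) : Set (Fin (n+1) → ℝ) :=
  convexHull ℝ {x | ∃ k : Fin (n+1), i ≤ k ∧ k ≤ j ∧ x = eVec k}

/-- Index set of the pairs `1 ≤ i ≤ j ≤ n+1`. -/
def pairIdx (n : ℕ) : Finset (Fin (n+1) × Fin (n+1)) :=
  Finset.univ.filter (fun p => p.1 ≤ p.2)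

/-- The associahedron `Ass_n^{III}(a)`: the Minkowski sum
`∑_{i ≤ j} a_{ij} Δ_{[i,…,j]}`. -/
noncomputable def AssIII (n : ℕ) (a : Fin (n+1) × Fin (n+1) → ℝ) :
    Set (Fin (n+1) → ℝ) :=
  {x | ∃ f : Fin (n+1) × Fin (n+1) → Fin (n+1) → ℝ,
    (∀ p ∈ pairIdx n, f p ∈ stdSimplexSeg n p.1 p.2) ∧
    x = ∑ p ∈ pairIdx n, a p • f p}

/-- The functional with first `i` coordinates `1`, the rest `0`. -/
def wFun (n : ℕ) (i : ℕ) : Fin (n+1) → ℝ := fun k => if (k : ℕ) < i then 1 else 0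

/-! The flip replaces the triangles `abc`, `acd` of `t` by `abd`, `bcd` and leaves every other
triangle alone: another triangle on the side `ac` of `t`, or on `bd` of `t'`, would have a side
crossing the other diagonal of the quadrilateral. So at the coordinate `a` the GKZ vector changes
by `area(abd) - area(abc) - area(acd) = -area(bcd)`, since both triangulations of the convex
quadrilateral `abcd` have the same area; likewise at `b`, `c`, `d`, and nowhere else. -/

theorem Finset.pair_eq_pair_iff {α : Type*} [DecidableEq α] {x y z w : α} :
    ({x, y} : Finset α) = {z, w} ↔ x = z ∧ y = w ∨ x = w ∧ y = z := by
  rw [← coe_inj, coe_pair, coe_pair, Set.pair_eq_pair_iff]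

section Polygon

variable {m : ℕ}

theorem adjacent_iff_val {x y : Fin m} :
    adjacent m x y ↔ x.val + 1 = y.val ∨ y.val + 1 = x.val ∨
      (x.val + 1 = m ∧ y.val = 0) ∨ (y.val + 1 = m ∧ x.val = 0) := by
  have hmod : ∀ k : Fin m, (k.val + 1) % m = if k.val + 1 = m then 0 else k.val + 1 := by
    intro k
    split_ifs with h
    · rw [h, Nat.mod_self]
    · exact Nat.mod_eq_of_lt (by omega)
  rw [adjacent, hmod, hmod]
  split_ifs <;> omega

theorem adjacent_comm {x y : Fin m} : adjacent m x y ↔ adjacent m y x := Or.comm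

theorem edgeOrDiag_comm {t : Finset (Finset (Fin m))} {x y : Fin m} :
    edgeOrDiag m t x y ↔ edgeOrDiag m t y x := by
  rw [edgeOrDiag, edgeOrDiag, adjacent_comm, pair_comm]

theorem Crosses.symm {d e : Finset (Fin m)} (h : Crosses m d e) : Crosses m e d := by
  obtain ⟨p, q, r, s, hpq, hqr, hrs, hde⟩ := h
  exact ⟨p, q, r, s, hpq, hqr, hrs, hde.symm.imp And.symm And.symm⟩

theorem crosses_pair_iff {x y u v : Fin m} :
    Crosses m {x, y} {u, v} ↔ x ≠ u ∧ x ≠ v ∧ y ≠ u ∧ y ≠ v ∧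
      ((x < u ∧ u < y ∨ y < u ∧ u < x) ↔ ¬ (x < v ∧ v < y ∨ y < v ∧ v < x)) := by
  constructor
  · rintro ⟨p, q, r, s, hpq, hqr, hrs, ⟨hd, he⟩ | ⟨hd, he⟩⟩ <;>
    rcases pair_eq_pair_iff.1 hd with ⟨rfl, rfl⟩ | ⟨rfl, rfl⟩ <;>
    rcases pair_eq_pair_iff.1 he with ⟨rfl, rfl⟩ | ⟨rfl, rfl⟩ <;> omega
  · intro h
    wlog hxy : x < y generalizing x y
    · rw [pair_comm]; exact this (by omega) (by omega)
    wlog huv : u < v generalizing u v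
    · rw [pair_comm u v]; exact this (by omega) (by omega)
    by_cases hu : x < u ∧ u < y
    · exact ⟨x, u, y, v, hu.1, hu.2, by omega, Or.inl ⟨rfl, rfl⟩⟩
    · exact ⟨u, x, v, y, by omega, by omega, by omega, Or.inr ⟨rfl, rfl⟩⟩

theorem not_crosses_of_adjacent {x y u v : Fin m} (h : adjacent m x y) :
    ¬ Crosses m {x, y} {u, v} := by
  rw [adjacent_iff_val] at h
  rw [crosses_pair_iff]
  omega

end Polygon

namespace IsTriangulation

variable {m : ℕ} {t : Finset (Finset (Fin m))}

theorem not_crosses_of_edgeOrDiag (ht : IsTriangulation m t) {x y : Fin m}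
    (hxy : edgeOrDiag m t x y) {e : Finset (Fin m)} (he : e ∈ t) : ¬ Crosses m {x, y} e := by
  obtain ⟨u, v, -, -, rfl⟩ := ht.1 e he
  rcases hxy with hadj | hmem
  · exact not_crosses_of_adjacent hadj
  · exact ht.2.1 _ hmem _ he

theorem edgeOrDiag_of_forall_not_crosses (ht : IsTriangulation m t) {x y : Fin m} (hxy : x ≠ y)
    (h : ∀ e ∈ t, ¬ Crosses m {x, y} e) : edgeOrDiag m t x y := by
  by_cases hadj : adjacent m x y
  · exact Or.inl hadj
  · exact Or.inr (ht.2.2 _ ⟨x, y, hxy, hadj, rfl⟩ h)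

theorem not_edgeOrDiag_and_of_crosses (ht : IsTriangulation m t) {p q r s v : Fin m}
    (hqs : {q, s} ∈ t) (hcross : Crosses m {p, r} {q, s}) (hvq : v ≠ q) (hvs : v ≠ s) :
    ¬ (edgeOrDiag m t p v ∧ edgeOrDiag m t r v) := by
  rintro ⟨hp, hr⟩
  have : Crosses m {p, v} {q, s} ∨ Crosses m {r, v} {q, s} := by
    simp only [crosses_pair_iff] at hcross ⊢
    omega
  rcases this with h | h
  exacts [ht.not_crosses_of_edgeOrDiag hp hqs h, ht.not_crosses_of_edgeOrDiag hr hqs h]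

end IsTriangulation

structure IsFlip (m : ℕ) (t t' : Finset (Finset (Fin m))) (a b c d : Fin m) : Prop where
  lt_ab : a < b
  lt_bc : b < c
  lt_cd : c < d
  mem : {a, c} ∈ t
  eq_insert_erase : t' = insert {b, d} (t.erase {a, c})

open Classical in
noncomputable def triangles (m : ℕ) (t : Finset (Finset (Fin m))) :
    Finset (Fin m × Fin m × Fin m) :=
  {p | p.1 < p.2.1 ∧ p.2.1 < p.2.2 ∧ edgeOrDiag m t p.1 p.2.1 ∧ edgeOrDiag m t p.2.1 p.2.2 ∧
    edgeOrDiag m t p.1 p.2.2}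

noncomputable def triAreaAt {m : ℕ} (q : Fin m → ℝ × ℝ) (i : Fin m) (p : Fin m × Fin m × Fin m) :
    ℝ :=
  if i = p.1 ∨ i = p.2.1 ∨ i = p.2.2 then triArea (q p.1) (q p.2.1) (q p.2.2) else 0

theorem gkz_eq_sum_triangles {m : ℕ} (q : Fin m → ℝ × ℝ) (t : Finset (Finset (Fin m)))
    (i : Fin m) : gkz m q t i = ∑ p ∈ triangles m t, triAreaAt q i p := by
  simp only [gkz, triangles, triAreaAt, sum_filter, Fintype.sum_prod_type, ite_and]

namespace IsFlip

variable {m : ℕ} {t t' : Finset (Finset (Fin m))} {a b c d : Fin m}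

theorem crosses (hf : IsFlip m t t' a b c d) : Crosses m {a, c} {b, d} :=
  ⟨a, b, c, d, hf.lt_ab, hf.lt_bc, hf.lt_cd, Or.inl ⟨rfl, rfl⟩⟩

theorem mem' (hf : IsFlip m t t' a b c d) : {b, d} ∈ t' :=
  hf.eq_insert_erase ▸ mem_insert_self _ _

theorem not_edgeOrDiag_bd (hf : IsFlip m t t' a b c d) (ht : IsTriangulation m t) :
    ¬ edgeOrDiag m t b d := fun h =>
  ht.not_crosses_of_edgeOrDiag h hf.mem hf.crosses.symm

theorem edgeOrDiag_iff (hf : IsFlip m t t' a b c d) {x y : Fin m} :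
    edgeOrDiag m t' x y ↔
      (edgeOrDiag m t x y ∧ ({x, y} : Finset (Fin m)) ≠ {a, c}) ∨
        ({x, y} : Finset (Fin m)) = {b, d} := by
  have hadj : adjacent m x y → ({x, y} : Finset (Fin m)) ≠ {a, c} := fun h hxy =>
    not_crosses_of_adjacent (u := b) (v := d) h (by rw [hxy]; exact hf.crosses)
  rw [edgeOrDiag, edgeOrDiag, hf.eq_insert_erase, mem_insert, mem_erase]
  tauto

theorem edgeOrDiag_sides (hf : IsFlip m t t' a b c d) (ht : IsTriangulation m t)
    (ht' : IsTriangulation m t') :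
    edgeOrDiag m t a b ∧ edgeOrDiag m t b c ∧ edgeOrDiag m t c d ∧ edgeOrDiag m t a d := by
  have hab := hf.lt_ab; have hbc := hf.lt_bc; have hcd := hf.lt_cd
  suffices h : ∀ x y : Fin m, (x = a ∧ y = b ∨ x = b ∧ y = c ∨ x = c ∧ y = d ∨ x = a ∧ y = d) →
      edgeOrDiag m t x y by
    exact ⟨h a b (by simp), h b c (by simp), h c d (by simp), h a d (by simp)⟩
  intro x y hside
  refine ht.edgeOrDiag_of_forall_not_crosses (by omega) fun e he hcr => ?_
  obtain ⟨u, v, -, -, rfl⟩ := ht.1 e he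
  -- `e` would cross `ac` or `bd`; it is not `ac`, which shares an endpoint with every side,
  -- so it lies in `t'` as well.
  by_cases he' : ({u, v} : Finset (Fin m)) = {a, c}
  · rw [he', crosses_pair_iff] at hcr
    omega
  · have he'' : {u, v} ∈ t' := hf.eq_insert_erase ▸ mem_insert_of_mem (mem_erase.2 ⟨he', he⟩)
    have hac := ht.2.1 _ he _ hf.mem
    have hbd := ht'.2.1 _ he'' _ hf.mem'
    rw [crosses_pair_iff] at hcr hac hbd
    omega

theorem not_edgeOrDiag_and (hf : IsFlip m t t' a b c d) (ht' : IsTriangulation m t') {v : Fin m}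
    (hva : v ≠ a) (hvb : v ≠ b) (hvc : v ≠ c) (hvd : v ≠ d) :
    ¬ (edgeOrDiag m t a v ∧ edgeOrDiag m t c v) := by
  rintro ⟨hav, hcv⟩
  refine ht'.not_edgeOrDiag_and_of_crosses hf.mem' hf.crosses hvb hvd ⟨?_, ?_⟩ <;>
    simp only [hf.edgeOrDiag_iff, ne_eq, pair_eq_pair_iff]
  · exact Or.inl ⟨hav, by tauto⟩
  · exact Or.inl ⟨hcv, by tauto⟩

theorem triangles_eq (hf : IsFlip m t t' a b c d) (ht : IsTriangulation m t)
    (ht' : IsTriangulation m t') :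
    triangles m t' =
      insert (a, b, d) (insert (b, c, d) (((triangles m t).erase (a, b, c)).erase (a, c, d))) := by
  have hab := hf.lt_ab; have hbc := hf.lt_bc; have hcd := hf.lt_cd
  obtain ⟨Eab, Ebc, Ecd, Ead⟩ := hf.edgeOrDiag_sides ht ht'
  have Eac : edgeOrDiag m t a c := Or.inr hf.mem
  have nEbd := hf.not_edgeOrDiag_bd ht
  have apex_ac := fun v => hf.not_edgeOrDiag_and ht' (v := v)
  have apex_bd := fun v => ht.not_edgeOrDiag_and_of_crosses (v := v) hf.mem hf.crosses.symm
  ext ⟨x, y, z⟩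
  simp only [triangles, mem_insert, mem_erase, mem_filter, mem_univ, true_and, Prod.mk.injEq,
    hf.edgeOrDiag_iff, ne_eq, pair_eq_pair_iff]
  -- Away from the pairs `{a, c}` and `{b, d}`, `t` and `t'` have the same edges; a triangle of
  -- `t` on `ac` has apex `b` or `d`, and a triangle of `t'` on `bd` has apex `a` or `c`.
  grind [edgeOrDiag_comm]

theorem gkz_sub_gkz (hf : IsFlip m t t' a b c d) (ht : IsTriangulation m t)
    (ht' : IsTriangulation m t') (q : Fin m → ℝ × ℝ) (i : Fin m) :
    gkz m q t' i - gkz m q t i =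
      triAreaAt q i (a, b, d) + triAreaAt q i (b, c, d) -
        triAreaAt q i (a, b, c) - triAreaAt q i (a, c, d) := by
  have hab := hf.lt_ab; have hbc := hf.lt_bc; have hcd := hf.lt_cd
  obtain ⟨Eab, Ebc, Ecd, Ead⟩ := hf.edgeOrDiag_sides ht ht'
  have Eac : edgeOrDiag m t a c := Or.inr hf.mem
  have nEbd := hf.not_edgeOrDiag_bd ht
  have habc : (a, b, c) ∈ triangles m t := by simp [triangles, hab, hbc, Eab, Ebc, Eac]
  have hacd : (a, c, d) ∈ (triangles m t).erase (a, b, c) := by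
    simp [triangles, hbc.ne', hab.trans hbc, hcd, Eac, Ecd, Ead]
  have habd : (a, b, d) ∉ insert (b, c, d) (((triangles m t).erase (a, b, c)).erase (a, c, d)) := by
    simp [triangles, hab.ne, nEbd]
  have hbcd : (b, c, d) ∉ ((triangles m t).erase (a, b, c)).erase (a, c, d) := by
    simp [triangles, nEbd]
  rw [gkz_eq_sum_triangles, gkz_eq_sum_triangles, hf.triangles_eq ht ht', sum_insert habd,
    sum_insert hbcd, sum_erase_eq_sub hacd, sum_erase_eq_sub habc]
  ring

end IsFlip

namespace ConvexCCW

variable {m : ℕ} {q : Fin m → ℝ × ℝ}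

theorem triArea_eq (hq : ConvexCCW m q) {i j k : Fin m} (hij : i < j) (hjk : j < k) :
    triArea (q i) (q j) (q k) =
      (((q j).1 - (q i).1) * ((q k).2 - (q i).2) -
        ((q k).1 - (q i).1) * ((q j).2 - (q i).2)) / 2 := by
  rw [triArea, abs_of_pos (hq i j k hij hjk)]

theorem triArea_pos (hq : ConvexCCW m q) {i j k : Fin m} (hij : i < j) (hjk : j < k) :
    0 < triArea (q i) (q j) (q k) := by
  rw [hq.triArea_eq hij hjk]
  exact half_pos (hq i j k hij hjk)

/-- Both triangulations of a convex quadrilateral cover the same area. -/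
theorem triArea_add_triArea (hq : ConvexCCW m q) {a b c d : Fin m} (hab : a < b) (hbc : b < c)
    (hcd : c < d) :
    triArea (q a) (q b) (q d) + triArea (q b) (q c) (q d) =
      triArea (q a) (q b) (q c) + triArea (q a) (q c) (q d) := by
  rw [hq.triArea_eq hab (hbc.trans hcd), hq.triArea_eq hbc hcd, hq.triArea_eq hab hbc,
    hq.triArea_eq (hab.trans hbc) hcd]
  ring

end ConvexCCW

/-- If `t'` is obtained from `t` by flipping the diagonal
`{a,c}` to the crossing diagonal `{b,d}` (with `a,b,c,d` in cyclic order), then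
`v(t') − v(t)` is nonzero exactly in the coordinates `a`, `b`, `c`, `d`. -/
theorem gkz_flip_support (n : ℕ) (q : Fin (n+3) → ℝ × ℝ) (hq : ConvexCCW (n+3) q)
    (t t' : Finset (Finset (Fin (n+3))))
    (ht : IsTriangulation (n+3) t) (ht' : IsTriangulation (n+3) t')
    (a b c d : Fin (n+3)) (hab : a < b) (hbc : b < c) (hcd : c < d)
    (hmem : ({a, c} : Finset (Fin (n+3))) ∈ t)
    (hflip : t' = insert ({b, d} : Finset (Fin (n+3))) (t.erase {a, c})) :
    ∀ i : Fin (n+3),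
      gkz (n+3) q t' i - gkz (n+3) q t i ≠ 0 ↔ (i = a ∨ i = b ∨ i = c ∨ i = d) := by
  intro i
  have hf : IsFlip (n+3) t t' a b c d := ⟨hab, hbc, hcd, hmem, hflip⟩
  rw [hf.gkz_sub_gkz ht ht']
  have hquad := hq.triArea_add_triArea hab hbc hcd
  have habc := hq.triArea_pos hab hbc
  have habd := hq.triArea_pos hab (hbc.trans hcd)
  have hacd := hq.triArea_pos (hab.trans hbc) hcd
  have hbcd := hq.triArea_pos hbc hcd
  have hac := hab.trans hbc
  have hbd := hbc.trans hcd
  have had := hac.trans hcd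
  constructor
  · contrapose!
    rintro ⟨ha, hb, hc, hd⟩
    simp [triAreaAt, ha, hb, hc, hd]
  · rintro (rfl | rfl | rfl | rfl) <;>
      simp [triAreaAt, hab.ne, hbc.ne, hcd.ne, hac.ne, hbd.ne, had.ne, hab.ne', hbc.ne', hcd.ne',
        hac.ne', hbd.ne', had.ne'] <;>
      linarith
end

section
/- For each pair (i,j) with 1 ≤ i ≤ j ≤ n, there is exactly one diagonal of the labeled (n+3)-gon that crosses the snake diagonal δ_k for every i ≤ k ≤ j and crosses no other snake diagonal; moreover, the resulting map (i,j) ↦ diagonal is a bijection from {(i,j) : 1 ≤ i ≤ j ≤ n} onto the set of diagonals of the (n+3)-gon that are not snake diagonals. -/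
open Finset

-- aux
lemma pair_inj {m : ℕ} {a b c d : Fin m} (hab : a < b) (hcd : c < d)
    (h : ({a, b} : Finset (Fin m)) = {c, d}) : a = c ∧ b = d := by
  have h2 : ({a, b} : Set (Fin m)) = {c, d} := by
    have := Finset.coe_inj.mpr h
    simpa using this
  rcases Set.pair_eq_pair_iff.mp h2 with ⟨h1, h2⟩ | ⟨h1, h2⟩
  · exact ⟨h1, h2⟩
  · exact absurd hcd (by rw [← h1, ← h2]; exact lt_asymm hab)

lemma crosses_pair_iff_s6 {m : ℕ} {a b c d : Fin m} (hab : a < b) (hcd : c < d) :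
    Crosses m {a, b} {c, d} ↔ (a < c ∧ c < b ∧ b < d) ∨ (c < a ∧ a < d ∧ d < b) := by
  constructor
  · rintro ⟨p, q, r, s, h1, h2, h3, ⟨e1, e2⟩ | ⟨e1, e2⟩⟩
    · obtain ⟨rfl, rfl⟩ := pair_inj hab (h1.trans h2) e1
      obtain ⟨rfl, rfl⟩ := pair_inj hcd (h2.trans h3) e2
      exact Or.inl ⟨h1, h2, h3⟩
    · obtain ⟨rfl, rfl⟩ := pair_inj hab (h2.trans h3) e1
      obtain ⟨rfl, rfl⟩ := pair_inj hcd (h1.trans h2) e2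
      exact Or.inr ⟨h1, h2, h3⟩
  · rintro (⟨h1, h2, h3⟩ | ⟨h1, h2, h3⟩)
    · exact ⟨a, c, b, d, h1, h2, h3, Or.inl ⟨rfl, rfl⟩⟩
    · exact ⟨c, a, d, b, h1, h2, h3, Or.inr ⟨rfl, rfl⟩⟩

lemma isDiagonal_iff {m : ℕ} {dd : Finset (Fin m)} :
    IsDiagonal m dd ↔ ∃ a b : Fin m, a < b ∧ a.val + 2 ≤ b.val ∧
      ¬(a.val = 0 ∧ b.val + 1 = m) ∧ dd = {a, b} := by
  constructor
  · rintro ⟨a, b, hne, hadj, rfl⟩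
    have key : ∀ x y : Fin m, x < y → ¬ adjacent m x y →
        x.val + 2 ≤ y.val ∧ ¬(x.val = 0 ∧ y.val + 1 = m) := by
      intro x y hxy hA
      have hy := y.isLt
      have hx : x.val + 1 < m := by omega
      have e1 : (x.val + 1) % m = x.val + 1 := Nat.mod_eq_of_lt hx
      rcases Nat.lt_or_ge (y.val + 1) m with h | h
      · have e2 : (y.val + 1) % m = y.val + 1 := Nat.mod_eq_of_lt h
        simp only [adjacent, e1, e2, not_or] at hA
        constructor
        · rcases Nat.lt_or_ge (x.val + 1) y.val with h' | h'
          · omega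
          · exact absurd (by omega : x.val + 1 = y.val) hA.1
        · omega
      · have hym : y.val + 1 = m := by omega
        have e2 : (y.val + 1) % m = 0 := by rw [hym]; exact Nat.mod_self m
        simp only [adjacent, e1, e2, not_or] at hA
        constructor
        · rcases Nat.lt_or_ge (x.val + 1) y.val with h' | h'
          · omega
          · exact absurd (by omega : x.val + 1 = y.val) hA.1
        · intro ⟨h0, _⟩
          exact hA.2 h0.symm
    rcases lt_or_gt_of_ne hne with h | h
    · obtain ⟨h1, h2⟩ := key a b h hadj
      exact ⟨a, b, h, h1, h2, rfl⟩
    · have hadj' : ¬ adjacent m b a := fun h' => hadj (Or.symm h')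
      obtain ⟨h1, h2⟩ := key b a h hadj'
      exact ⟨b, a, h, h1, h2, Finset.pair_comm a b⟩
  · rintro ⟨a, b, hab, h2, h3, rfl⟩
    refine ⟨a, b, Fin.ne_of_lt hab, ?_, rfl⟩
    have hy := b.isLt
    intro hA
    rcases hA with h | h
    · rw [Nat.mod_eq_of_lt (by omega)] at h; omega
    · rcases Nat.lt_or_ge (b.val + 1) m with h' | h'
      · rw [Nat.mod_eq_of_lt h'] at h; omega
      · have : (b.val + 1) % m = 0 := by
          have : b.val + 1 = m := by omega
          rw [this]; exact Nat.mod_self m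
        omega

def CnP (n a b k : ℕ) : Prop :=
  (a < (k+2)/2 ∧ (k+2)/2 < b ∧ b < n+2-(k+1)/2) ∨
  ((k+2)/2 < a ∧ a < n+2-(k+1)/2 ∧ n+2-(k+1)/2 < b)

def CnQ (n a b k : ℕ) : Prop :=
  (2*a ≤ k ∧ k+2 < 2*b + k%2 ∧ 2*b + k + k%2 < 2*n+4) ∨
  (k+2 < 2*a + k%2 ∧ 2*a + k + k%2 < 2*n+4 ∧ 2*n+4 < 2*b + k + k%2)

lemma CnP_iff {n a b k : ℕ} (hk : k < n) : CnP n a b k ↔ CnQ n a b k := by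
  simp only [CnP, CnQ]; omega

def zg (n t : ℕ) : ℕ := if t % 2 = 0 then t/2 else n+2-t/2

def unz (n v : ℕ) : ℕ := if 2*v ≤ n+2 then 2*v else 2*(n+2-v)+1

lemma zg_even {n t : ℕ} (h : t % 2 = 0) : zg n t = t/2 := if_pos h
lemma zg_odd {n t : ℕ} (h : t % 2 = 1) : zg n t = n+2-t/2 := if_neg (by omega)

set_option maxHeartbeats 1600000 in
lemma coreA (n i j : ℕ) (hij : i ≤ j) (hj : j < n) :
    min (zg n i) (zg n (j+3)) + 2 ≤ max (zg n i) (zg n (j+3)) ∧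
    max (zg n i) (zg n (j+3)) ≤ n+2 ∧
    ¬(min (zg n i) (zg n (j+3)) = 0 ∧ max (zg n i) (zg n (j+3)) = n+2) ∧
    ∀ k, k < n → (CnP n (min (zg n i) (zg n (j+3))) (max (zg n i) (zg n (j+3))) k
      ↔ i ≤ k ∧ k ≤ j) := by
  rcases Nat.mod_two_eq_zero_or_one i with hi | hi <;>
    rcases Nat.mod_two_eq_zero_or_one (j+3) with hj2 | hj2
  · simp only [zg_even hi, zg_even hj2]
    exact ⟨by omega, by omega, by omega,
      fun k hk => (CnP_iff hk).trans (by simp only [CnQ]; omega)⟩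
  · simp only [zg_even hi, zg_odd hj2]
    exact ⟨by omega, by omega, by omega,
      fun k hk => (CnP_iff hk).trans (by simp only [CnQ]; omega)⟩
  · simp only [zg_odd hi, zg_even hj2]
    exact ⟨by omega, by omega, by omega,
      fun k hk => (CnP_iff hk).trans (by simp only [CnQ]; omega)⟩
  · simp only [zg_odd hi, zg_odd hj2]
    exact ⟨by omega, by omega, by omega,
      fun k hk => (CnP_iff hk).trans (by simp only [CnQ]; omega)⟩

set_option maxHeartbeats 1600000 in
lemma coreB (n i j a b : ℕ) (hij : i ≤ j) (hj : j < n) (hd1 : a+2 ≤ b) (hd2 : b ≤ n+2)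
    (hd3 : ¬(a = 0 ∧ b = n+2))
    (hC : ∀ k, k < n → (CnP n a b k ↔ i ≤ k ∧ k ≤ j)) :
    a = min (zg n i) (zg n (j+3)) ∧ b = max (zg n i) (zg n (j+3)) := by
  have hC' : ∀ k, k < n → (CnQ n a b k ↔ i ≤ k ∧ k ≤ j) :=
    fun k hk => (CnP_iff hk).symm.trans (hC k hk)
  have h1 := hC' i (by omega)
  have h2 := hC' j hj
  have h3 : i = 0 ∨ (0 < i ∧ ¬ CnQ n a b (i-1)) := by
    by_cases hi : i = 0
    · exact Or.inl hi
    · exact Or.inr ⟨by omega, by rw [hC' (i-1) (by omega)]; omega⟩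
  have h4 : j+1 = n ∨ (j+1 < n ∧ ¬ CnQ n a b (j+1)) := by
    by_cases hjn : j+1 = n
    · exact Or.inl hjn
    · exact Or.inr ⟨by omega, by rw [hC' (j+1) (by omega)]; omega⟩
  clear hC hC'
  simp only [CnQ] at h1 h2 h3 h4
  rcases Nat.mod_two_eq_zero_or_one i with hi | hi <;>
    rcases Nat.mod_two_eq_zero_or_one (j+3) with hj2 | hj2 <;>
    simp only [zg_even, zg_odd, hi, hj2] <;>
    constructor <;> omega

lemma coreNC (n k k' : ℕ) (hk : k < n) (hk' : k' < n) :
    ¬ CnP n ((k+2)/2) (n+2-(k+1)/2) k' := by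
  simp only [CnP]; omega

lemma unz_le {n v : ℕ} (h : 2*v ≤ n+2) : unz n v = 2*v := if_pos h
lemma unz_gt {n v : ℕ} (h : n+2 < 2*v) : unz n v = 2*(n+2-v)+1 := if_neg (by omega)

lemma coreC (n a b : ℕ) (hd1 : a+2 ≤ b) (hd2 : b ≤ n+2) (hd3 : ¬(a = 0 ∧ b = n+2))
    (hs : ∀ k, k < n → ¬(a = (k+2)/2 ∧ b = n+2-(k+1)/2)) :
    min (unz n a) (unz n b) ≤ max (unz n a) (unz n b) - 3 ∧
    max (unz n a) (unz n b) - 3 < n ∧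
    ∀ k, k < n → (CnP n a b k ↔
      min (unz n a) (unz n b) ≤ k ∧ k ≤ max (unz n a) (unz n b) - 3) := by
  have hs' : ¬ (min (unz n a) (unz n b) - 1 < n) ∨
      ¬(a = (min (unz n a) (unz n b) - 1 + 2)/2 ∧
        b = n+2-(min (unz n a) (unz n b) - 1 + 1)/2) := by
    by_cases hk0 : min (unz n a) (unz n b) - 1 < n
    · exact Or.inr (hs _ hk0)
    · exact Or.inl hk0
  rcases le_or_gt (2*a) (n+2) with ha | ha <;>
    rcases le_or_gt (2*b) (n+2) with hb | hb <;>
    [rw [unz_le ha, unz_le hb] at hs' ⊢;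
     rw [unz_le ha, unz_gt hb] at hs' ⊢;
     rw [unz_gt ha, unz_le hb] at hs' ⊢;
     rw [unz_gt ha, unz_gt hb] at hs' ⊢] <;>
    exact ⟨by omega, by omega, fun k hk => by simp only [CnP]; omega⟩

-- bridge
lemma cross_snake {n : ℕ} {a b : Fin (n+3)} (hab : a < b) (k : Fin n) :
    Crosses (n+3) {a, b} (snake n k) ↔ CnP n a.val b.val k.val := by
  have hk := k.isLt
  have h : (⟨(k.val+2)/2, by omega⟩ : Fin (n+3)) < ⟨n+2-(k.val+1)/2, by omega⟩ := by
    simp only [Fin.mk_lt_mk]; omega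
  rw [snake, crosses_pair_iff_s6 hab h]
  simp only [CnP, Fin.lt_def]

lemma snake_eq_iff {n : ℕ} {a b : Fin (n+3)} (hab : a < b) (k : Fin n) :
    ({a, b} : Finset (Fin (n+3))) = snake n k ↔
      a.val = (k.val+2)/2 ∧ b.val = n+2-(k.val+1)/2 := by
  have hk := k.isLt
  have h : (⟨(k.val+2)/2, by omega⟩ : Fin (n+3)) < ⟨n+2-(k.val+1)/2, by omega⟩ := by
    simp only [Fin.mk_lt_mk]; omega
  constructor
  · intro he
    obtain ⟨e1, e2⟩ := pair_inj hab h he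
    exact ⟨congrArg Fin.val e1, congrArg Fin.val e2⟩
  · rintro ⟨e1, e2⟩
    rw [snake]
    congr 1
    · exact Fin.ext e1
    · congr 1; exact Fin.ext e2

/-- For each `i ≤ j` there is exactly one diagonal crossing the
snake diagonals `δ_i, …, δ_j` and no other snake diagonal; this diagonal is not
a snake diagonal, and the resulting map is a bijection onto the set of
non-snake diagonals. -/
theorem snake_crossing_bijection (n : ℕ) :
    (∀ i j : Fin n, i ≤ j →
      ∃! d : Finset (Fin (n+3)), IsDiagonal (n+3) d ∧
        (∀ k : Fin n, Crosses (n+3) d (snake n k) ↔ (i ≤ k ∧ k ≤ j))) ∧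
    (∀ i j : Fin n, i ≤ j → ∀ d : Finset (Fin (n+3)),
      IsDiagonal (n+3) d →
      (∀ k : Fin n, Crosses (n+3) d (snake n k) ↔ (i ≤ k ∧ k ≤ j)) →
      ∀ i' : Fin n, d ≠ snake n i') ∧
    (∀ d : Finset (Fin (n+3)), IsDiagonal (n+3) d → (∀ i : Fin n, d ≠ snake n i) →
      ∃! p : Fin n × Fin n, p.1 ≤ p.2 ∧
        (∀ k : Fin n, Crosses (n+3) d (snake n k) ↔ (p.1 ≤ k ∧ k ≤ p.2))) := by
  refine ⟨?_, ?_, ?_⟩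
  · -- Part 1: existence and uniqueness
    intro i j hij
    have hij' : i.val ≤ j.val := hij
    obtain ⟨h1, h2, h3, h4⟩ := coreA n i.val j.val hij' j.isLt
    refine ⟨{⟨min (zg n i.val) (zg n (j.val+3)), by omega⟩,
             ⟨max (zg n i.val) (zg n (j.val+3)), by omega⟩}, ⟨?_, ?_⟩, ?_⟩
    · exact isDiagonal_iff.mpr ⟨_, _, by simp only [Fin.mk_lt_mk]; omega,
        by simpa using h1, by simp only []; omega, rfl⟩
    · intro k
      rw [cross_snake (by simp only [Fin.mk_lt_mk]; omega) k]
      exact h4 k.val k.isLt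
    · rintro d ⟨hd, hcr⟩
      obtain ⟨a, b, hab, hb1, hb2, rfl⟩ := isDiagonal_iff.mp hd
      have hcr' : ∀ kk, kk < n → (CnP n a.val b.val kk ↔ i.val ≤ kk ∧ kk ≤ j.val) := by
        intro kk hkk
        have := hcr ⟨kk, hkk⟩
        rw [cross_snake hab] at this
        exact this
      obtain ⟨ea, eb⟩ := coreB n i.val j.val a.val b.val hij' j.isLt hb1
        (by have := b.isLt; omega) (by have := b.isLt; omega) hcr'
      congr 1
      · exact Fin.ext ea
      · congr 1; exact Fin.ext eb
  · -- Part 2: not a snake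
    intro i j hij d hd hcr i' heq
    have hij' : i.val ≤ j.val := hij
    obtain ⟨a, b, hab, hb1, hb2, rfl⟩ := isDiagonal_iff.mp hd
    have hx : Crosses (n+3) ({a, b} : Finset (Fin (n+3))) (snake n i) :=
      (hcr i).mpr ⟨le_refl i, hij⟩
    obtain ⟨e1, e2⟩ := snake_eq_iff hab i' |>.mp heq
    rw [cross_snake hab] at hx
    rw [e1, e2] at hx
    exact coreNC n i'.val i.val i'.isLt i.isLt hx
  · -- Part 3: surjectivity
    intro d hd hns
    obtain ⟨a, b, hab, hb1, hb2, rfl⟩ := isDiagonal_iff.mp hd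
    have hs : ∀ kk, kk < n → ¬(a.val = (kk+2)/2 ∧ b.val = n+2-(kk+1)/2) := by
      intro kk hkk hc
      exact hns ⟨kk, hkk⟩ ((snake_eq_iff hab ⟨kk, hkk⟩).mpr hc)
    obtain ⟨g1, g2, g3⟩ := coreC n a.val b.val hb1
      (by have := b.isLt; omega) (by have := b.isLt; omega) hs
    have hcrI : ∀ k : Fin n, Crosses (n+3) ({a, b} : Finset (Fin (n+3))) (snake n k) ↔
        ((⟨min (unz n a.val) (unz n b.val), by omega⟩ : Fin n) ≤ k ∧
         k ≤ (⟨max (unz n a.val) (unz n b.val) - 3, g2⟩ : Fin n)) := by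
      intro k
      rw [cross_snake hab k]
      exact g3 k.val k.isLt
    refine ⟨(⟨min (unz n a.val) (unz n b.val), by omega⟩,
             ⟨max (unz n a.val) (unz n b.val) - 3, g2⟩), ⟨g1, hcrI⟩, ?_⟩
    rintro ⟨p1, p2⟩ ⟨hple, hpcr⟩
    have e := fun (k : Fin n) => ((hpcr k).symm.trans (hcrI k))
    have c1 := e p1
    have c2 := e p2
    have c3 := e ⟨min (unz n a.val) (unz n b.val), by omega⟩
    have c4 := e ⟨max (unz n a.val) (unz n b.val) - 3, g2⟩
    have hple' : p1.val ≤ p2.val := hple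
    simp only [Fin.le_def] at c1 c2 c3 c4
    have hv : p1.val = min (unz n a.val) (unz n b.val) ∧
        p2.val = max (unz n a.val) (unz n b.val) - 3 := by omega
    exact Prod.ext (Fin.ext hv.1) (Fin.ext hv.2)
end

section
/- For any two clusters C and C' of type A_n, the intersection of the cones ℝ_{≥0}C and ℝ_{≥0}C' (the sets of nonnegative linear combinations of C and of C', respectively) equals ℝ_{≥0}(C ∩ C'); in particular, the cluster cones form a simplicial fan. -/
open Finset

/-!
The partial sums `X_k(x) = x_0 + ⋯ + x_k` (`k < n`) send the positive root `α_a + ⋯ + α_b` to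
`1` if `k ∈ [a, b]` and to `0` otherwise, and send `-α_t` to `-1` if `t = k` and to `0` otherwise.
So if `x = ∑ c_β β` with `c ≥ 0` over a compatible family, `X_k(x)` is the total weight of the
positive roots whose interval contains `k`, minus the coefficient of `-α_k`. Since `-α_k` is
incompatible with all those roots, at most one of the two terms is nonzero, and both can be read
off from `x`.

It remains to show that the coverage function `t ↦ ∑_{t ∈ [a, b]} w_{ab}` determines a weighting
`w` of intervals whose diagonals pairwise do not cross. For the difference of two such weightings, whose positive and
negative parts are each non-crossing, this follows by induction on the length of the ground
interval: delete its first point, then compare the intervals that start at `0` with those that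
start at `1`. Hence two nonnegative representations of `x` over compatible families have the same
positive coefficients, which gives `ℝ≥0 C ∩ ℝ≥0 C' = ℝ≥0 (C ∩ C')`.
-/

namespace ClusterFan

lemma pair_eq_pair_iff {α : Type*} [DecidableEq α] {a b c d : α} :
    ({a, b} : Finset α) = {c, d} ↔ (a = c ∧ b = d) ∨ (a = d ∧ b = c) := by
  rw [← Finset.coe_inj]
  push_cast
  exact Set.pair_eq_pair_iff

def Alternate (u v a b : ℕ) : Prop :=
  u ≠ a ∧ u ≠ b ∧ v ≠ a ∧ v ≠ b ∧
    (min u v < a ∧ a < max u v ↔ ¬ (min u v < b ∧ b < max u v))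

lemma crosses_of_alternate_of_lt {m : ℕ} {u v a b : Fin m} (huv : u < v) (hab : a < b)
    (h : Alternate u v a b) : Crosses m {u, v} {a, b} := by
  rw [Fin.lt_def] at huv hab
  unfold Alternate at h
  rcases (by omega : (u < a ∧ a < v ∧ v < b) ∨ (a < u ∧ u < b ∧ b < v)) with
    ⟨h1, h2, h3⟩ | ⟨h1, h2, h3⟩
  · exact ⟨u, a, v, b, h1, h2, h3, .inl ⟨rfl, rfl⟩⟩
  · exact ⟨a, u, b, v, h1, h2, h3, .inr ⟨rfl, rfl⟩⟩

lemma crosses_pair_iff {m : ℕ} {u v a b : Fin m} (huv : u ≠ v) (hab : a ≠ b) :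
    Crosses m {u, v} {a, b} ↔ Alternate u v a b := by
  constructor
  · rintro ⟨p, q, r, s, h1, h2, h3, ⟨hd, he⟩ | ⟨hd, he⟩⟩ <;>
    rcases pair_eq_pair_iff.1 hd with ⟨rfl, rfl⟩ | ⟨rfl, rfl⟩ <;>
    rcases pair_eq_pair_iff.1 he with ⟨rfl, rfl⟩ | ⟨rfl, rfl⟩ <;>
    rw [Fin.lt_def] at h1 h2 h3 <;> unfold Alternate <;> omega
  · intro h
    have huv' : (u : ℕ) ≠ v := Fin.val_ne_of_ne huv
    have hab' : (a : ℕ) ≠ b := Fin.val_ne_of_ne hab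
    rcases huv.lt_or_gt with huv | huv <;> rcases hab.lt_or_gt with hab | hab
    · exact crosses_of_alternate_of_lt huv hab h
    · rw [Finset.pair_comm a]
      exact crosses_of_alternate_of_lt huv hab (by unfold Alternate at h ⊢; omega)
    · rw [Finset.pair_comm u]
      exact crosses_of_alternate_of_lt huv hab (by unfold Alternate at h ⊢; omega)
    · rw [Finset.pair_comm u, Finset.pair_comm a]
      exact crosses_of_alternate_of_lt huv hab (by unfold Alternate at h ⊢; omega)

lemma add_one_mod_eq_iff {x y m : ℕ} (hx : x < m) (hy : y < m) :
    (x + 1) % m = y ↔ x + 1 = y ∨ x + 1 = m ∧ y = 0 := by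
  rcases (by omega : x + 1 < m ∨ x + 1 = m) with h | h
  · rw [Nat.mod_eq_of_lt h]; omega
  · rw [h, Nat.mod_self]; omega

lemma adjacent_iff {m : ℕ} {a b : Fin m} :
    adjacent m a b ↔ (a.val + 1 = b ∨ a.val + 1 = m ∧ b.val = 0) ∨
      (b.val + 1 = a ∨ b.val + 1 = m ∧ a.val = 0) := by
  rw [adjacent, add_one_mod_eq_iff a.isLt b.isLt, add_one_mod_eq_iff b.isLt a.isLt]

/-- The vertices `0, n+2, 1, n+1, 2, …` of the polygon in the order of the snake:
`δ_k` joins `zigzag n (k+1)` and `zigzag n (k+2)`. -/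
def zigzag (n t : ℕ) : Fin (n + 3) :=
  if h : t ≤ n + 2 then ⟨if t % 2 = 0 then t / 2 else n + 2 - t / 2, by split <;> omega⟩ else 0

lemma zigzag_val {n t : ℕ} (h : t ≤ n + 2) :
    ((zigzag n t : ℕ) = t / 2 ∧ t % 2 = 0) ∨ ((zigzag n t : ℕ) = n + 2 - t / 2 ∧ t % 2 = 1) := by
  simp only [zigzag, dif_pos h]
  split <;> omega

lemma eq_of_zigzag_eq {n s t : ℕ} (hs : s ≤ n + 2) (ht : t ≤ n + 2)
    (h : zigzag n s = zigzag n t) : s = t := by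
  rw [Fin.ext_iff] at h
  rcases zigzag_val hs with ⟨h1, _⟩ | ⟨h1, _⟩ <;> rcases zigzag_val ht with ⟨h2, _⟩ | ⟨h2, _⟩ <;>
    omega

def intervalDiag (n a b : ℕ) : Finset (Fin (n + 3)) := {zigzag n a, zigzag n (b + 3)}

lemma isDiagonal_intervalDiag {n a b : ℕ} (hab : a ≤ b) (hb : b < n) :
    IsDiagonal (n + 3) (intervalDiag n a b) := by
  refine ⟨_, _, fun h => by have := eq_of_zigzag_eq (by omega) (by omega) h; omega, ?_, rfl⟩
  rw [adjacent_iff]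
  rcases zigzag_val (n := n) (t := a) (by omega) with ⟨h1, _⟩ | ⟨h1, _⟩ <;>
    rcases zigzag_val (n := n) (t := b + 3) (by omega) with ⟨h2, _⟩ | ⟨h2, _⟩ <;> omega

lemma crosses_intervalDiag_snake_iff {n a b : ℕ} (hab : a ≤ b) (hb : b < n) (k : Fin n) :
    Crosses (n + 3) (intervalDiag n a b) (snake n k) ↔ a ≤ k ∧ k ≤ b := by
  have hk := k.isLt
  rw [intervalDiag, snake, crosses_pair_iff
    (fun h => by have := eq_of_zigzag_eq (by omega) (by omega) h; omega) (by simp; omega)]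
  rcases zigzag_val (n := n) (t := a) (by omega) with ⟨h1, _⟩ | ⟨h1, _⟩ <;>
    rcases zigzag_val (n := n) (t := b + 3) (by omega) with ⟨h2, _⟩ | ⟨h2, _⟩ <;>
    simp only [Alternate, h1, h2] <;> omega

/-- For `i < k` this holds exactly when the diagonals `intervalDiag n i j` and
`intervalDiag n k l` cross. -/
def SnakeCross (i j k l : ℕ) : Prop :=
  i < k ∧ ((k ≤ j + 1 ∧ j < l ∧ (j + k) % 2 = 1) ∨ (l < j ∧ (k + l) % 2 = 0))

lemma crosses_intervalDiag_of_snakeCross {n a b c d : ℕ} (hab : a ≤ b) (hb : b < n)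
    (hcd : c ≤ d) (hd : d < n) (h : SnakeCross a b c d) :
    Crosses (n + 3) (intervalDiag n a b) (intervalDiag n c d) := by
  rw [intervalDiag, intervalDiag, crosses_pair_iff
    (fun h => by have := eq_of_zigzag_eq (by omega) (by omega) h; omega)
    (fun h => by have := eq_of_zigzag_eq (by omega) (by omega) h; omega)]
  unfold SnakeCross at h
  rcases zigzag_val (n := n) (t := a) (by omega) with ⟨h1, _⟩ | ⟨h1, _⟩ <;>
    rcases zigzag_val (n := n) (t := b + 3) (by omega) with ⟨h2, _⟩ | ⟨h2, _⟩ <;>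
    rcases zigzag_val (n := n) (t := c) (by omega) with ⟨h3, _⟩ | ⟨h3, _⟩ <;>
    rcases zigzag_val (n := n) (t := d + 3) (by omega) with ⟨h4, _⟩ | ⟨h4, _⟩ <;>
    simp only [Alternate, h1, h2, h3, h4] <;> omega

/-- `e_p - e_q`: the positive root `α_a + ⋯ + α_b` is `rootVec n a (b + 1)` and `-α_k` is
`rootVec n (k + 1) k`. -/
def rootVec (n p q : ℕ) : Fin (n + 1) → ℝ := fun l =>
  (if l.val = p then 1 else 0) - (if l.val = q then 1 else 0)

lemma eVec_sub_eVec {n : ℕ} (i j : Fin (n + 1)) : eVec i - eVec j = rootVec n i j := by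
  funext l
  simp [eVec, rootVec, Pi.single_apply, Fin.ext_iff]

lemma rootVec_inj {n p q p' q' : ℕ} (hp : p ≤ n) (hq : q ≤ n) (hpq : p ≠ q)
    (h : rootVec n p q = rootVec n p' q') : p = p' ∧ q = q' := by
  have hp' : rootVec n p' q' ⟨p, by omega⟩ = 1 := by rw [← h]; simp [rootVec, hpq]
  have hq' : rootVec n p' q' ⟨q, by omega⟩ = -1 := by rw [← h]; simp [rootVec, Ne.symm hpq]
  simp only [rootVec] at hp' hq'
  split_ifs at hp' hq' <;> first | omega | linarith

lemma almostPositive_cases {n : ℕ} {β : Fin (n + 1) → ℝ} (h : AlmostPositive n β) :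
    (∃ a b, a ≤ b ∧ b < n ∧ β = rootVec n a (b + 1)) ∨ ∃ k < n, β = rootVec n (k + 1) k := by
  rcases h with ⟨i, j, hij, rfl⟩ | ⟨k, rfl⟩
  · rw [Fin.lt_def] at hij
    refine .inl ⟨i, j - 1, by omega, by omega, ?_⟩
    rw [eVec_sub_eVec, Nat.sub_add_cancel (by omega)]
  · refine .inr ⟨k, k.isLt, ?_⟩
    rw [simpleRoot, neg_sub, eVec_sub_eVec, Fin.val_succ, Fin.val_castSucc]

lemma rootDiag_interval {n a b : ℕ} (hab : a ≤ b) (hb : b < n) :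
    RootDiag n (rootVec n a (b + 1)) (intervalDiag n a b) :=
  .inr ⟨⟨a, by omega⟩, ⟨b, hb⟩, hab, by rw [eVec_sub_eVec]; rfl, isDiagonal_intervalDiag hab hb,
    fun k => crosses_intervalDiag_snake_iff hab hb k⟩

lemma rootDiag_negSimple {n k : ℕ} (hk : k < n) :
    RootDiag n (rootVec n (k + 1) k) (snake n ⟨k, hk⟩) :=
  .inl ⟨⟨k, hk⟩, by rw [simpleRoot, neg_sub, eVec_sub_eVec]; rfl, rfl⟩

def partialSum (n k : ℕ) : (Fin (n + 1) → ℝ) →ₗ[ℝ] ℝ :=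
  ∑ l ∈ univ.filter (fun l : Fin (n + 1) => l.val ≤ k), LinearMap.proj l

lemma partialSum_apply (n k : ℕ) (x : Fin (n + 1) → ℝ) :
    partialSum n k x = ∑ l ∈ univ.filter (fun l : Fin (n + 1) => l.val ≤ k), x l := by
  simp [partialSum, LinearMap.sum_apply]

lemma partialSum_rootVec {n k p q : ℕ} (hp : p ≤ n) (hq : q ≤ n) :
    partialSum n k (rootVec n p q) = (if p ≤ k then 1 else 0) - (if q ≤ k then 1 else 0) := by
  have key (r : ℕ) (hr : r ≤ n) : (∑ l ∈ univ.filter (fun l : Fin (n + 1) => l.val ≤ k),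
      if l.val = r then (1 : ℝ) else 0) = if r ≤ k then 1 else 0 := by
    simp_rw [show ∀ l : Fin (n + 1), l.val = r ↔ l = ⟨r, by omega⟩ from
      fun l => by simp [Fin.ext_iff]]
    rw [Finset.sum_ite_eq']
    simp
  simp only [partialSum_apply, rootVec, Finset.sum_sub_distrib, key p hp, key q hq]

/-- `g a b` is a weight on the interval `[a, b]`. -/
def cover (g : ℕ → ℕ → ℝ) (N t : ℕ) : ℝ := ∑ a ∈ range (t + 1), ∑ b ∈ Ico t N, g a b

def IntervalsIn (g : ℕ → ℕ → ℝ) (N : ℕ) : Prop := ∀ a b, g a b ≠ 0 → a ≤ b ∧ b < N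

def SnakeNoncrossing (S : ℕ → ℕ → Prop) : Prop :=
  ∀ a b c d, S a b → S c d → ¬ SnakeCross a b c d

def SignNoncrossing (g : ℕ → ℕ → ℝ) : Prop :=
  SnakeNoncrossing (fun a b => 0 < g a b) ∧ SnakeNoncrossing (fun a b => g a b < 0)

/-- Delete the point `0` and shift the remaining points down by one. -/
def dropHead (g : ℕ → ℕ → ℝ) (a b : ℕ) : ℝ :=
  g (a + 1) (b + 1) + if a = 0 then g 0 (b + 1) else 0

section Intervals

variable {g h : ℕ → ℕ → ℝ} {N : ℕ}

lemma cover_zero : cover g N 0 = ∑ b ∈ range N, g 0 b := by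
  simp only [cover, zero_add, Finset.sum_range_one, Nat.Ico_zero_eq_range]

lemma cover_neg (t : ℕ) : cover (-g) N t = -cover g N t := by
  simp only [cover, Pi.neg_apply, Finset.sum_neg_distrib]

lemma cover_sub (t : ℕ) : cover (g - h) N t = cover g N t - cover h N t := by
  simp only [cover, Pi.sub_apply, Finset.sum_sub_distrib]

lemma cover_nonneg (hg : ∀ a b, 0 ≤ g a b) (t : ℕ) : 0 ≤ cover g N t :=
  Finset.sum_nonneg fun a _ => Finset.sum_nonneg fun b _ => hg a b

lemma cover_dropHead (t : ℕ) : cover (dropHead g) N t = cover g (N + 1) (t + 1) := by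
  simp only [cover, dropHead, Finset.sum_add_distrib, Finset.sum_range_succ' _ (t + 1),
    Finset.sum_range_succ' _ t, ← Finset.sum_Ico_add', Nat.add_eq_zero_iff, one_ne_zero,
    and_false, ↓reduceIte, zero_add, Finset.sum_const_zero, add_zero]
  ring

lemma IntervalsIn.neg (hg : IntervalsIn g N) : IntervalsIn (-g) N :=
  fun a b hab => hg a b (by simpa using hab)

lemma IntervalsIn.sub (hg : IntervalsIn g N) (hh : IntervalsIn h N) : IntervalsIn (g - h) N := by
  intro a b hab
  by_cases hga : g a b = 0
  · exact hh a b fun hha => hab (by simp [hga, hha])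
  · exact hg a b hga

lemma intervalsIn_dropHead (hg : IntervalsIn g (N + 1)) : IntervalsIn (dropHead g) N := by
  intro a b hab
  by_cases hga : g (a + 1) (b + 1) = 0
  · obtain rfl : a = 0 := by by_contra ha; simp [dropHead, hga, ha] at hab
    have := hg 0 (b + 1) (by simpa [dropHead, hga] using hab)
    omega
  · have := hg _ _ hga
    omega

lemma SnakeNoncrossing.mono {S T : ℕ → ℕ → Prop} (hS : SnakeNoncrossing S)
    (hTS : ∀ a b, T a b → S a b) : SnakeNoncrossing T :=
  fun a b c d hab hcd => hS a b c d (hTS a b hab) (hTS c d hcd)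

lemma SignNoncrossing.neg (hg : SignNoncrossing g) : SignNoncrossing (-g) :=
  ⟨fun a b c d hab hcd => hg.2 a b c d (by simpa using hab) (by simpa using hcd),
    fun a b c d hab hcd => hg.1 a b c d (by simpa using hab) (by simpa using hcd)⟩

lemma signNoncrossing_sub (hg : SnakeNoncrossing (fun a b => g a b ≠ 0))
    (hh : SnakeNoncrossing (fun a b => h a b ≠ 0)) (hg0 : ∀ a b, 0 ≤ g a b)
    (hh0 : ∀ a b, 0 ≤ h a b) : SignNoncrossing (g - h) := by
  refine ⟨hg.mono fun a b hab hga => ?_, hh.mono fun a b hab hha => ?_⟩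
  · simp only [Pi.sub_apply, hga] at hab
    linarith [hh0 a b]
  · simp only [Pi.sub_apply, hha] at hab
    linarith [hg0 a b]

lemma exists_pos_of_pos_dropHead {a b : ℕ} (hab : 0 < dropHead g a b) :
    ∃ x, (x = a + 1 ∨ a = 0 ∧ x = 0) ∧ 0 < g x (b + 1) := by
  by_cases ha : a = 0
  · subst ha
    by_contra! h
    have h1 := h 1 (.inl rfl)
    have h0 := h 0 (.inr ⟨rfl, rfl⟩)
    simp only [dropHead, ↓reduceIte, zero_add] at hab
    linarith
  · exact ⟨a + 1, .inl rfl, by simpa [dropHead, ha] using hab⟩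

lemma snakeNoncrossing_dropHead (hg : SnakeNoncrossing (fun a b => 0 < g a b)) :
    SnakeNoncrossing (fun a b => 0 < dropHead g a b) := by
  intro a b c d hab hcd hcross
  obtain ⟨x, hx, hgx⟩ := exists_pos_of_pos_dropHead hab
  obtain ⟨y, hy, hgy⟩ := exists_pos_of_pos_dropHead hcd
  exact hg x (b + 1) y (d + 1) hgx hgy (by unfold SnakeCross at hcross ⊢; omega)

lemma dropHead_neg : dropHead (-g) = -dropHead g := by
  funext a b
  simp only [dropHead, Pi.neg_apply]
  split_ifs <;> ring

lemma signNoncrossing_dropHead (hg : SignNoncrossing g) : SignNoncrossing (dropHead g) := by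
  refine ⟨snakeNoncrossing_dropHead hg.1, ?_⟩
  simpa [dropHead_neg] using snakeNoncrossing_dropHead hg.neg.1

-- `[0, 0]` crosses every `[1, a]`, and for `a ≠ b` one of the pairs `[0, a], [1, b]` and
-- `[0, b], [1, a]` crosses.
lemma head_nonpos (hsupp : IntervalsIn g N) (hcov : cover g N 0 = 0) (hg : SignNoncrossing g)
    (hg1 : ∀ b, 1 ≤ b → g 1 b = -g 0 b) {a : ℕ} (ha : 1 ≤ a) : g 0 a ≤ 0 := by
  by_contra! hpos
  have h1a : g 1 a < 0 := by linarith [hg1 a ha]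
  have h00 : 0 ≤ g 0 0 := by
    by_contra! h
    exact hg.2 0 0 1 a h h1a (by unfold SnakeCross; omega)
  obtain ⟨b, hb, hneg⟩ : ∃ b, 1 ≤ b ∧ g 0 b < 0 := by
    by_contra! h
    have : 0 < ∑ b ∈ range N, g 0 b :=
      Finset.sum_pos' (fun b _ => by rcases b with _ | b; exacts [h00, h _ (by omega)])
        ⟨a, Finset.mem_range.2 (hsupp 0 a hpos.ne').2, hpos⟩
    rw [cover_zero] at hcov
    linarith
  have hab : a ≠ b := by rintro rfl; linarith
  rcases (by unfold SnakeCross; omega : SnakeCross 0 a 1 b ∨ SnakeCross 0 b 1 a) with h | h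
  · exact hg.1 0 a 1 b hpos (by linarith [hg1 b hb]) h
  · exact hg.2 0 b 1 a hneg h1a h

lemma eq_zero_of_dropHead_eq_zero (hsupp : IntervalsIn g (N + 1))
    (hcov : cover g (N + 1) 0 = 0) (hg : SignNoncrossing g) (hdrop : dropHead g = 0) :
    g = 0 := by
  have hdrop' (a b : ℕ) : g (a + 1) (b + 1) + (if a = 0 then g 0 (b + 1) else 0) = 0 :=
    congrFun (congrFun hdrop a) b
  have hg1 (b : ℕ) (hb : 1 ≤ b) : g 1 b = -g 0 b := by
    have := hdrop' 0 (b - 1)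
    rw [if_pos rfl, Nat.sub_add_cancel hb] at this
    linarith
  have hhead (b : ℕ) (hb : 1 ≤ b) : g 0 b = 0 := by
    refine le_antisymm (head_nonpos hsupp hcov hg hg1 hb) (neg_nonpos.1 ?_)
    refine head_nonpos hsupp.neg (by rw [cover_neg, hcov, neg_zero]) hg.neg (fun b hb => ?_) hb
    simp [hg1 b hb]
  have h00 : g 0 0 = 0 := by
    rwa [cover_zero, Finset.sum_eq_single_of_mem 0 (by simp)
      (fun b _ hb => hhead b (by omega))] at hcov
  funext a b
  show g a b = 0
  by_cases hab : a ≤ b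
  · rcases a with _ | _ | a
    · rcases b with _ | b
      exacts [h00, hhead _ (by omega)]
    · rw [hg1 b (by omega), hhead b (by omega), neg_zero]
    · obtain ⟨b, rfl⟩ : ∃ c, b = c + 1 := ⟨b - 1, by omega⟩
      simpa using hdrop' (a + 1) b
  · by_contra h
    exact hab (hsupp a b h).1

theorem eq_zero_of_cover_eq_zero (hsupp : IntervalsIn g N) (hcov : ∀ t < N, cover g N t = 0)
    (hg : SignNoncrossing g) : g = 0 := by
  induction N generalizing g with
  | zero =>
    funext a b
    by_contra h
    exact absurd (hsupp a b h).2 (Nat.not_lt_zero b)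
  | succ N ih =>
    refine eq_zero_of_dropHead_eq_zero hsupp (hcov 0 N.succ_pos) hg
      (ih (intervalsIn_dropHead hsupp) (fun t ht => ?_) (signNoncrossing_dropHead hg))
    rw [cover_dropHead, hcov (t + 1) (by omega)]

end Intervals

lemma eq_and_eq_of_sub_eq_sub {a b a' b' : ℝ} (ha : 0 ≤ a) (hb : 0 ≤ b) (ha' : 0 ≤ a')
    (hb' : 0 ≤ b') (hab : a * b = 0) (hab' : a' * b' = 0) (h : a - b = a' - b') :
    a = a' ∧ b = b' := by
  rcases mul_eq_zero.1 hab with rfl | rfl <;> rcases mul_eq_zero.1 hab' with rfl | rfl <;>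
    constructor <;> linarith

def IsCompatibleFamily (n : ℕ) (C : Finset (Fin (n + 1) → ℝ)) : Prop :=
  (∀ β ∈ C, AlmostPositive n β) ∧ ∀ β ∈ C, ∀ γ ∈ C, Compatible n β γ

lemma isCompatibleFamily_of_isCluster {n : ℕ} {C : Finset (Fin (n + 1) → ℝ)}
    (h : IsCluster n C) : IsCompatibleFamily n C :=
  ⟨h.1, h.2.1⟩

def PosRootThrough (n k : ℕ) (β : Fin (n + 1) → ℝ) : Prop :=
  ∃ a b, a ≤ k ∧ k ≤ b ∧ b < n ∧ β = rootVec n a (b + 1)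

section Weights

open Classical

noncomputable def intervalWeight (n : ℕ) (C : Finset (Fin (n + 1) → ℝ))
    (c : (Fin (n + 1) → ℝ) → ℝ) (a b : ℕ) : ℝ :=
  if a ≤ b ∧ b < n ∧ rootVec n a (b + 1) ∈ C then c (rootVec n a (b + 1)) else 0

noncomputable def negWeight (n : ℕ) (C : Finset (Fin (n + 1) → ℝ))
    (c : (Fin (n + 1) → ℝ) → ℝ) (k : ℕ) : ℝ :=
  if rootVec n (k + 1) k ∈ C then c (rootVec n (k + 1) k) else 0

variable {n : ℕ} {C : Finset (Fin (n + 1) → ℝ)} {c : (Fin (n + 1) → ℝ) → ℝ}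

lemma partialSum_of_almostPositive {β : Fin (n + 1) → ℝ} (hβ : AlmostPositive n β) (k : ℕ) :
    partialSum n k β =
      (if PosRootThrough n k β then 1 else 0) - if β = rootVec n (k + 1) k then 1 else 0 := by
  rcases almostPositive_cases hβ with ⟨a, b, hab, hb, rfl⟩ | ⟨t, ht, rfl⟩
  · have hthrough : PosRootThrough n k (rootVec n a (b + 1)) ↔ a ≤ k ∧ k ≤ b := by
      constructor
      · rintro ⟨a', b', h1, h2, h3, h⟩
        have := rootVec_inj (by omega) (by omega) (by omega) h
        omega
      · exact fun h => ⟨a, b, h.1, h.2, hb, rfl⟩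
    have hneg : rootVec n a (b + 1) ≠ rootVec n (k + 1) k := fun h => by
      have := rootVec_inj (by omega) (by omega) (by omega) h
      omega
    rw [partialSum_rootVec (by omega) (by omega), if_congr hthrough rfl rfl, if_neg hneg]
    split_ifs <;> (try norm_num) <;> omega
  · have hthrough : ¬ PosRootThrough n k (rootVec n (t + 1) t) := by
      rintro ⟨a, b, h1, h2, h3, h⟩
      have := rootVec_inj (by omega) (by omega) (by omega) h
      omega
    have hneg : rootVec n (t + 1) t = rootVec n (k + 1) k ↔ t = k :=
      ⟨fun h => by have := rootVec_inj (by omega) (by omega) (by omega) h; omega,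
        fun h => h ▸ rfl⟩
    rw [partialSum_rootVec (by omega) (by omega), if_neg hthrough, if_congr hneg rfl rfl]
    split_ifs <;> (try norm_num) <;> omega

lemma cover_intervalWeight (k : ℕ) :
    cover (intervalWeight n C c) n k = ∑ β ∈ C.filter (PosRootThrough n k), c β := by
  set Q := (range (k + 1) ×ˢ Ico k n).filter (fun p => rootVec n p.1 (p.2 + 1) ∈ C)
  have himage : C.filter (PosRootThrough n k) = Q.image (fun p => rootVec n p.1 (p.2 + 1)) := by
    ext β
    simp only [Q, PosRootThrough, Finset.mem_filter, Finset.mem_image, Finset.mem_product,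
      Finset.mem_range, Finset.mem_Ico, Prod.exists]
    constructor
    · rintro ⟨hβ, a, b, h1, h2, h3, rfl⟩
      exact ⟨a, b, ⟨⟨by omega, h2, h3⟩, hβ⟩, rfl⟩
    · rintro ⟨a, b, ⟨⟨h1, h2, h3⟩, hβ⟩, rfl⟩
      exact ⟨hβ, a, b, by omega, h2, h3, rfl⟩
  have hinj : Set.InjOn (fun p : ℕ × ℕ => rootVec n p.1 (p.2 + 1)) Q := by
    intro p hp q hq h
    simp only [Q, Finset.coe_filter, Finset.mem_product, Finset.mem_range, Finset.mem_Ico,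
      Set.mem_ofPred_eq] at hp hq
    have := rootVec_inj (by omega) (by omega) (by omega) h
    exact Prod.ext this.1 (by omega)
  rw [himage, Finset.sum_image hinj, Finset.sum_filter, cover, ← Finset.sum_product']
  refine Finset.sum_congr rfl fun p hp => ?_
  simp only [Finset.mem_product, Finset.mem_range, Finset.mem_Ico] at hp
  simp only [intervalWeight]
  congr 1
  exact propext ⟨fun h => h.2.2, fun h => ⟨by omega, hp.2.2, h⟩⟩

lemma partialSum_sum_smul (hC : ∀ β ∈ C, AlmostPositive n β) (k : ℕ) :
    partialSum n k (∑ β ∈ C, c β • β) =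
      cover (intervalWeight n C c) n k - negWeight n C c k := by
  simp only [map_sum, map_smul, smul_eq_mul]
  rw [Finset.sum_congr rfl fun β hβ => by rw [partialSum_of_almostPositive (hC β hβ) k]]
  simp only [mul_sub, mul_ite, mul_one, mul_zero, Finset.sum_sub_distrib, Finset.sum_ite_eq']
  rw [← Finset.sum_filter, cover_intervalWeight, negWeight]

lemma intervalWeight_ne_zero {a b : ℕ} (h : intervalWeight n C c a b ≠ 0) :
    a ≤ b ∧ b < n ∧ rootVec n a (b + 1) ∈ C := by
  by_contra h'
  exact h (if_neg h')

lemma intervalsIn_intervalWeight : IntervalsIn (intervalWeight n C c) n :=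
  fun _ _ h => ⟨(intervalWeight_ne_zero h).1, (intervalWeight_ne_zero h).2.1⟩

lemma mem_of_negWeight_ne_zero {k : ℕ} (h : negWeight n C c k ≠ 0) :
    rootVec n (k + 1) k ∈ C := by
  by_contra h'
  exact h (if_neg h')

lemma intervalWeight_nonneg (hc : ∀ β ∈ C, 0 ≤ c β) (a b : ℕ) :
    0 ≤ intervalWeight n C c a b := by
  unfold intervalWeight
  split_ifs with h
  exacts [hc _ h.2.2, le_rfl]

lemma negWeight_nonneg (hc : ∀ β ∈ C, 0 ≤ c β) (k : ℕ) : 0 ≤ negWeight n C c k := by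
  unfold negWeight
  split_ifs with h
  exacts [hc _ h, le_rfl]

lemma snakeNoncrossing_intervalWeight (hC : ∀ β ∈ C, ∀ γ ∈ C, Compatible n β γ) :
    SnakeNoncrossing (fun a b => intervalWeight n C c a b ≠ 0) := by
  intro a b a' b' h h' hcross
  obtain ⟨hab, hb, hmem⟩ := intervalWeight_ne_zero h
  obtain ⟨hab', hb', hmem'⟩ := intervalWeight_ne_zero h'
  exact hC _ hmem _ hmem' _ _ (rootDiag_interval hab hb) (rootDiag_interval hab' hb')
    (crosses_intervalDiag_of_snakeCross hab hb hab' hb' hcross)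

lemma cover_intervalWeight_mul_negWeight (hC : ∀ β ∈ C, ∀ γ ∈ C, Compatible n β γ) {k : ℕ}
    (hk : k < n) : cover (intervalWeight n C c) n k * negWeight n C c k = 0 := by
  by_cases h : negWeight n C c k = 0
  · rw [h, mul_zero]
  rw [cover_intervalWeight, Finset.sum_eq_zero, zero_mul]
  intro β hβ
  obtain ⟨hβC, a, b, h1, h2, h3, rfl⟩ := Finset.mem_filter.1 hβ
  exact absurd ((crosses_intervalDiag_snake_iff (by omega) h3 ⟨k, hk⟩).2 ⟨h1, h2⟩)
    (hC _ hβC _ (mem_of_negWeight_ne_zero h) _ _ (rootDiag_interval (by omega) h3)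
      (rootDiag_negSimple hk))

variable {C' : Finset (Fin (n + 1) → ℝ)} {c' : (Fin (n + 1) → ℝ) → ℝ}

theorem weights_eq_of_sum_eq (hC : IsCompatibleFamily n C) (hC' : IsCompatibleFamily n C')
    (hc : ∀ β ∈ C, 0 ≤ c β) (hc' : ∀ β ∈ C', 0 ≤ c' β)
    (hsum : ∑ β ∈ C, c β • β = ∑ β ∈ C', c' β • β) :
    intervalWeight n C c = intervalWeight n C' c' ∧
      ∀ k < n, negWeight n C c k = negWeight n C' c' k := by
  have hsplit (k : ℕ) (hk : k < n) :
      cover (intervalWeight n C c) n k = cover (intervalWeight n C' c') n k ∧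
        negWeight n C c k = negWeight n C' c' k :=
    eq_and_eq_of_sub_eq_sub (cover_nonneg (intervalWeight_nonneg hc) k)
      (negWeight_nonneg hc k) (cover_nonneg (intervalWeight_nonneg hc') k)
      (negWeight_nonneg hc' k) (cover_intervalWeight_mul_negWeight hC.2 hk)
      (cover_intervalWeight_mul_negWeight hC'.2 hk)
      (by rw [← partialSum_sum_smul hC.1, ← partialSum_sum_smul hC'.1, hsum])
  refine ⟨sub_eq_zero.1 (eq_zero_of_cover_eq_zero (N := n) ?_ ?_ ?_), fun k hk => (hsplit k hk).2⟩
  · exact intervalsIn_intervalWeight.sub intervalsIn_intervalWeight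
  · intro t ht
    rw [cover_sub, (hsplit t ht).1, sub_self]
  · exact signNoncrossing_sub (snakeNoncrossing_intervalWeight hC.2)
      (snakeNoncrossing_intervalWeight hC'.2) (intervalWeight_nonneg hc)
      (intervalWeight_nonneg hc')

theorem mem_of_sum_eq_of_pos (hC : IsCompatibleFamily n C) (hC' : IsCompatibleFamily n C')
    (hc : ∀ β ∈ C, 0 ≤ c β) (hc' : ∀ β ∈ C', 0 ≤ c' β)
    (hsum : ∑ β ∈ C, c β • β = ∑ β ∈ C', c' β • β) {β : Fin (n + 1) → ℝ} (hβ : β ∈ C)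
    (hcβ : 0 < c β) : β ∈ C' := by
  obtain ⟨hW, hT⟩ := weights_eq_of_sum_eq hC hC' hc hc' hsum
  rcases almostPositive_cases (hC.1 β hβ) with ⟨a, b, hab, hb, rfl⟩ | ⟨k, hk, rfl⟩
  · refine (intervalWeight_ne_zero (c := c') ?_).2.2
    rw [← hW]
    simp [intervalWeight, hab, hb, hβ, hcβ.ne']
  · refine mem_of_negWeight_ne_zero (c := c') ?_
    rw [← hT k hk]
    simp [negWeight, hβ, hcβ.ne']

lemma coneOf_mono {D E : Finset (Fin (n + 1) → ℝ)} (h : D ⊆ E) : coneOf n D ⊆ coneOf n E := by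
  rintro x ⟨c, hc, rfl⟩
  refine ⟨fun β => if β ∈ D then c β else 0, fun β _ => ?_, ?_⟩
  · dsimp only
    split_ifs with hβ
    exacts [hc β hβ, le_rfl]
  · simp only [ite_smul, zero_smul, Finset.sum_ite_mem, Finset.inter_eq_right.2 h]

lemma sum_mem_coneOf_inter {D : Finset (Fin (n + 1) → ℝ)} (hc : ∀ β ∈ C, 0 ≤ c β)
    (hD : ∀ β ∈ C, 0 < c β → β ∈ D) : ∑ β ∈ C, c β • β ∈ coneOf n (C ∩ D) := by
  refine ⟨c, fun β hβ => hc β (Finset.mem_inter.1 hβ).1,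
    (Finset.sum_subset Finset.inter_subset_left fun β hβ hβ' => ?_).symm⟩
  rcases (hc β hβ).lt_or_eq with h | h
  · exact absurd (Finset.mem_inter.2 ⟨hβ, hD β hβ h⟩) hβ'
  · rw [← h, zero_smul]

theorem coneOf_inter_coneOf (hC : IsCompatibleFamily n C) (hC' : IsCompatibleFamily n C') :
    coneOf n C ∩ coneOf n C' = coneOf n (C ∩ C') := by
  refine Set.Subset.antisymm ?_ fun x hx =>
    ⟨coneOf_mono Finset.inter_subset_left hx, coneOf_mono Finset.inter_subset_right hx⟩
  rintro x ⟨⟨c, hc, rfl⟩, c', hc', hsum⟩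
  exact sum_mem_coneOf_inter hc fun β hβ hcβ => mem_of_sum_eq_of_pos hC hC' hc hc' hsum hβ hcβ

end Weights

end ClusterFan

open Classical in
/-- For any two clusters `C`, `C'` of type `A n`, the
intersection of their cones equals the cone over `C ∩ C'`; in particular the
cluster cones form a simplicial fan. -/
theorem cluster_cones_fan (n : ℕ) (C C' : Finset (Fin (n+1) → ℝ))
    (hC : IsCluster n C) (hC' : IsCluster n C') :
    coneOf n C ∩ coneOf n C' = coneOf n (C ∩ C') :=
  ClusterFan.coneOf_inter_coneOf (ClusterFan.isCompatibleFamily_of_isCluster hC)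
    (ClusterFan.isCompatibleFamily_of_isCluster hC')
end

section
/- For every n ≥ 1 and every choice of positive parameters a = (a_{ij}), there is a bijection φ from the set of nonempty faces of Ass_n^{III}(a) onto the set of all sets of pairwise non-crossing diagonals of the labeled (n+3)-gon such that for any two nonempty faces F and G: F ⊆ G if and only if φ(F) ⊇ φ(G). In particular, the vertices of Ass_n^{III}(a) are in bijection with the triangulations of the (n+3)-gon, and Ass_n^{III}(a) is an n-dimensional associahedron. -/
open Finset

/-!
A face of a Minkowski sum is the sum of the faces of its summands, and the face of the simplex
`Δ_{[i,j]}` maximizing `w` is spanned by the vertices `e k` with `k` an argmax of `w` on `[i, j]`.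
Hence the face of `Ass_n^{III}(a)` maximizing `w` is contained in the one maximizing `u` exactly
when, on every interval, every argmax of `w` is an argmax of `u`. The argmax sets of `w` are
governed by its *basins*: proper intervals on whose points `w` is strictly smaller than at both
neighbouring positions. So face inclusion becomes reverse inclusion of basin families. Basins never
cross, and conversely a noncrossing family of proper intervals is the basin family of minus its
depth function. Finally the interval `[i, j] ⊆ [0, n]` corresponds to the diagonal `{i, j + 2}` of
the `(n + 3)`-gon, and two intervals cross exactly when their diagonals do.
-/

theorem exists_bijective_order_reversing_of_surjective {α P Q : Type*} [PartialOrder P]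
    [PartialOrder Q] {f : α → P} {g : α → Q} (hf : Function.Surjective f)
    (hg : Function.Surjective g) (hfg : ∀ a b, f a ≤ f b ↔ g b ≤ g a) :
    ∃ φ : P → Q, Function.Bijective φ ∧ ∀ x y, x ≤ y ↔ φ y ≤ φ x := by
  choose s hs using hf
  have key : ∀ x y, x ≤ y ↔ g (s y) ≤ g (s x) := fun x y => by rw [← hfg, hs, hs]
  refine ⟨g ∘ s, ⟨fun x y h => le_antisymm ((key x y).2 h.ge) ((key y x).2 h.le),
    fun q => ?_⟩, key⟩
  obtain ⟨a, rfl⟩ := hg q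
  exact ⟨f a, le_antisymm ((hfg a _).1 (hs _).ge) ((hfg _ a).1 (hs _).le)⟩

namespace Associahedron

section Basins

def argmaxIcc (v : ℕ → ℝ) (x y : ℕ) : Set ℕ :=
  {k | x ≤ k ∧ k ≤ y ∧ ∀ l, x ≤ l → l ≤ y → v l ≤ v k}

variable {v : ℕ → ℝ} {x y k : ℕ}

lemma argmaxIcc_nonempty (h : x ≤ y) : (argmaxIcc v x y).Nonempty := by
  obtain ⟨k, hk, hmax⟩ := (Finset.Icc x y).exists_max_image v ⟨x, by simp [h]⟩
  rw [Finset.mem_Icc] at hk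
  exact ⟨k, hk.1, hk.2, fun l h1 h2 => hmax l (Finset.mem_Icc.2 ⟨h1, h2⟩)⟩

lemma mem_argmaxIcc_of_le {m : ℕ} (hk : x ≤ k ∧ k ≤ y) (hm : m ∈ argmaxIcc v x y)
    (h : v m ≤ v k) : k ∈ argmaxIcc v x y :=
  ⟨hk.1, hk.2, fun l h1 h2 => (hm.2.2 l h1 h2).trans h⟩

lemma argmaxIcc_apply_eq {m : ℕ} (hk : k ∈ argmaxIcc v x y) (hm : m ∈ argmaxIcc v x y) :
    v k = v m :=
  le_antisymm (hm.2.2 k hk.1 hk.2.1) (hk.2.2 m hm.1 hm.2.1)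

lemma argmaxIcc_subset_left_iff :
    argmaxIcc v x y ⊆ {x} ↔ ∀ k, x < k → k ≤ y → v k < v x := by
  constructor
  · intro h k hxk hky
    by_contra! hle
    obtain ⟨m, hm⟩ := argmaxIcc_nonempty (v := v) (by omega : x ≤ y)
    rw [show m = x from h hm] at hm
    have : k = x := h (mem_argmaxIcc_of_le ⟨hxk.le, hky⟩ hm hle)
    omega
  · rintro h k ⟨hxk, hky, hmax⟩
    rw [Set.mem_singleton_iff]
    by_contra hne
    linarith [h k (by omega) hky, hmax x le_rfl (by omega)]

lemma argmaxIcc_subset_right_iff :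
    argmaxIcc v x y ⊆ {y} ↔ ∀ k, x ≤ k → k < y → v k < v y := by
  constructor
  · intro h k hxk hky
    by_contra! hle
    obtain ⟨m, hm⟩ := argmaxIcc_nonempty (v := v) (by omega : x ≤ y)
    rw [show m = y from h hm] at hm
    have : k = y := h (mem_argmaxIcc_of_le ⟨hxk, hky.le⟩ hm hle)
    omega
  · rintro h k ⟨hxk, hky, hmax⟩
    rw [Set.mem_singleton_iff]
    by_contra hne
    linarith [h k hxk (by omega), hmax y (by omega) le_rfl]

/-- `M` stands for the interval `[M.1, M.2]` of positions in `[0, n]`. -/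
def IsProperInterval (n : ℕ) (M : ℕ × ℕ) : Prop :=
  M.1 ≤ M.2 ∧ M.2 ≤ n ∧ ¬(M.1 = 0 ∧ M.2 = n)

def IsBasin (n : ℕ) (v : ℕ → ℝ) (M : ℕ × ℕ) : Prop :=
  IsProperInterval n M ∧ (0 < M.1 → ∀ k, M.1 ≤ k → k ≤ M.2 → v k < v (M.1 - 1)) ∧
    (M.2 < n → ∀ k, M.1 ≤ k → k ≤ M.2 → v k < v (M.2 + 1))

/-- Under `[i, j] ↦ {i, j + 2}` this is the crossing of diagonals, so touching intervals
`[i, j]`, `[j + 1, l]` cross. -/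
def IntervalsCross (M M' : ℕ × ℕ) : Prop :=
  (M.1 < M'.1 ∧ M'.1 ≤ M.2 + 1 ∧ M.2 < M'.2) ∨
    (M'.1 < M.1 ∧ M.1 ≤ M'.2 + 1 ∧ M'.2 < M.2)

def IsNoncrossingFamily (n : ℕ) (F : Finset (ℕ × ℕ)) : Prop :=
  (∀ M ∈ F, IsProperInterval n M) ∧ ∀ M ∈ F, ∀ M' ∈ F, ¬IntervalsCross M M'

variable {n : ℕ} {M M' : ℕ × ℕ}

lemma isBasin_iff_argmaxIcc : IsBasin n v M ↔ IsProperInterval n M ∧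
    (0 < M.1 → argmaxIcc v (M.1 - 1) M.2 ⊆ {M.1 - 1}) ∧
    (M.2 < n → argmaxIcc v M.1 (M.2 + 1) ⊆ {M.2 + 1}) := by
  simp only [IsBasin, argmaxIcc_subset_left_iff, argmaxIcc_subset_right_iff]
  refine and_congr_right fun _ =>
    and_congr (imp_congr_right fun _ => ?_) (imp_congr_right fun _ => ?_)
  all_goals exact forall_congr' fun k => ⟨fun H h1 h2 => H (by omega) (by omega),
    fun H h1 h2 => H (by omega) (by omega)⟩

lemma not_intervalsCross_of_isBasin (hM : IsBasin n v M) (hM' : IsBasin n v M') :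
    ¬IntervalsCross M M' := by
  obtain ⟨⟨-, hMn, -⟩, hL, hR⟩ := hM
  obtain ⟨⟨-, hM'n, -⟩, hL', hR'⟩ := hM'
  rintro (⟨h1, h2, h3⟩ | ⟨h1, h2, h3⟩)
  · linarith [hR (by omega) (M'.1 - 1) (by omega) (by omega),
      hL' (by omega) (M.2 + 1) (by omega) (by omega)]
  · linarith [hR' (by omega) (M.1 - 1) (by omega) (by omega),
      hL (by omega) (M'.2 + 1) (by omega) (by omega)]

lemma exists_left_end (v : ℕ → ℝ) (c : ℝ) : ∀ k, v k ≤ c →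
    ∃ i ≤ k, (∀ m, i ≤ m → m ≤ k → v m ≤ c) ∧ (0 < i → c < v (i - 1))
  | 0, h => ⟨0, le_rfl, fun m _ hm => by rwa [Nat.le_zero.1 hm], by omega⟩
  | k + 1, h => by
    by_cases hk : v k ≤ c
    · obtain ⟨i, hik, hi, hlt⟩ := exists_left_end v c k hk
      refine ⟨i, by omega, fun m h1 h2 => ?_, hlt⟩
      rcases (by omega : m ≤ k ∨ m = k + 1) with hm | rfl
      exacts [hi m h1 hm, h]
    · exact ⟨k + 1, le_rfl, fun m h1 h2 => by rwa [show m = k + 1 by omega],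
        fun _ => by simpa using not_le.1 hk⟩

lemma exists_right_end (v : ℕ → ℝ) (c : ℝ) (hk : k ≤ n) (hv : v k ≤ c) :
    ∃ j, k ≤ j ∧ j ≤ n ∧ (∀ m, k ≤ m → m ≤ j → v m ≤ c) ∧
      (j < n → c < v (j + 1)) := by
  obtain ⟨i, hi, hle, hlt⟩ :=
    exists_left_end (fun m => v (n - m)) c (n - k) (by rwa [Nat.sub_sub_self hk])
  refine ⟨n - i, by omega, by omega, fun m h1 h2 => ?_, fun h => ?_⟩
  · simpa [Nat.sub_sub_self (h2.trans (Nat.sub_le n i))] using hle (n - m) (by omega) (by omega)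
  · simpa [show n - (i - 1) = n - i + 1 by omega] using hlt (by omega)

lemma exists_isBasin_of_lt {l : ℕ} (hl : l ≤ n) (hk : k ≤ n) (h : v k < v l) :
    ∃ M, IsBasin n v M ∧ M.1 ≤ k ∧ k ≤ M.2 ∧ ¬(M.1 ≤ l ∧ l ≤ M.2) := by
  obtain ⟨i, hik, hi, hilt⟩ := exists_left_end v (v k) k le_rfl
  obtain ⟨j, hkj, hjn, hj, hjlt⟩ := exists_right_end v (v k) hk le_rfl
  have hle : ∀ m, i ≤ m → m ≤ j → v m ≤ v k := fun m h1 h2 =>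
    (le_total m k).elim (hi m h1) (fun h3 => hj m h3 h2)
  have hlM : ¬(i ≤ l ∧ l ≤ j) := fun hlM => (hle l hlM.1 hlM.2).not_gt h
  exact ⟨(i, j), ⟨⟨by omega, hjn, by omega⟩,
    fun h0 m h1 h2 => (hle m h1 h2).trans_lt (hilt h0),
    fun h0 m h1 h2 => (hle m h1 h2).trans_lt (hjlt h0)⟩, hik, hkj, hlM⟩

theorem argmaxIcc_subset_iff_isBasin_imp (v v' : ℕ → ℝ) :
    (∀ x y, y ≤ n → argmaxIcc v x y ⊆ argmaxIcc v' x y) ↔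
      ∀ M, IsBasin n v' M → IsBasin n v M := by
  constructor
  · intro h M hM
    rw [isBasin_iff_argmaxIcc] at hM ⊢
    obtain ⟨hP, hL, hR⟩ := hM
    exact ⟨hP, fun h0 => (h _ _ hP.2.1).trans (hL h0),
      fun h0 => (h _ _ (by omega)).trans (hR h0)⟩
  · rintro h x y hy k ⟨hxk, hky, hmax⟩
    refine ⟨hxk, hky, fun l hxl hly => ?_⟩
    by_contra! hlt
    obtain ⟨M, hM, hMk, hkM, hlM⟩ := exists_isBasin_of_lt (n := n) (by omega) (by omega) hlt
    obtain ⟨-, hL, hR⟩ := h M hM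
    -- `l ∈ [x, y]` lies outside `M ∋ k`, so a neighbour of `M` lies in `[x, y]`
    rcases (by omega : x < M.1 ∨ M.2 < y) with hx | hy'
    · linarith [hL (by omega) k hMk hkM, hmax (M.1 - 1) (by omega) (by omega)]
    · linarith [hR (by omega) k hMk hkM, hmax (M.2 + 1) (by omega) (by omega)]

open Classical in
noncomputable def basins (n : ℕ) (v : ℕ → ℝ) : Finset (ℕ × ℕ) :=
  (range (n + 1) ×ˢ range (n + 1)).filter (IsBasin n v)

lemma mem_basins : M ∈ basins n v ↔ IsBasin n v M := by
  classical
  simp only [basins, mem_filter, mem_product, mem_range, and_iff_right_iff_imp]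
  rintro ⟨⟨h1, h2, -⟩, -⟩
  omega

lemma isNoncrossingFamily_basins : IsNoncrossingFamily n (basins n v) :=
  ⟨fun _ hM => (mem_basins.1 hM).1, fun _ hM _ hM' =>
    not_intervalsCross_of_isBasin (mem_basins.1 hM) (mem_basins.1 hM')⟩

lemma basins_subset_basins_iff (v v' : ℕ → ℝ) :
    basins n v' ⊆ basins n v ↔ ∀ M, IsBasin n v' M → IsBasin n v M :=
  ⟨fun h _ hM => mem_basins.1 (h (mem_basins.2 hM)),
    fun h M hM => mem_basins.2 (h M (mem_basins.1 hM))⟩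

end Basins

section Depth

def depth (F : Finset (ℕ × ℕ)) (k : ℕ) : ℕ := #(F.filter fun M => M.1 ≤ k ∧ k ≤ M.2)

variable {n : ℕ} {F : Finset (ℕ × ℕ)} {M J : ℕ × ℕ} {k b : ℕ}

/-- A member containing a neighbour `b` of `M` contains all of `M`. -/
lemma depth_lt_of_adjacent (hF : ∀ M' ∈ F, ¬IntervalsCross M' M) (hM : M ∈ F)
    (hk : M.1 ≤ k ∧ k ≤ M.2) (hb : b + 1 = M.1 ∨ b = M.2 + 1) : depth F b < depth F k := by
  refine card_lt_card ((ssubset_iff_of_subset fun M' hM' => ?_).2 ⟨M, ?_, ?_⟩)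
  · rw [mem_filter] at hM' ⊢
    have := hF M' hM'.1
    unfold IntervalsCross at this
    exact ⟨hM'.1, by omega⟩
  · exact mem_filter.2 ⟨hM, hk⟩
  · rw [mem_filter]
    omega

lemma isBasin_neg_depth_of_mem (hF : IsNoncrossingFamily n F) (hM : M ∈ F) :
    IsBasin n (fun k => -(depth F k : ℝ)) M := by
  have hadj k b := depth_lt_of_adjacent (k := k) (b := b) (fun M' hM' => hF.2 M' hM' M hM) hM
  refine ⟨hF.1 M hM, fun h0 k h1 h2 => ?_, fun _ k h1 h2 => ?_⟩
  · simpa using hadj k (M.1 - 1) ⟨h1, h2⟩ (Or.inl (by omega))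
  · simpa using hadj k (M.2 + 1) ⟨h1, h2⟩ (Or.inr rfl)

lemma not_intervalsCross_of_isBasin_neg_depth (hF : IsNoncrossingFamily n F)
    (hJ : IsBasin n (fun k => -(depth F k : ℝ)) J) (hM : M ∈ F) : ¬IntervalsCross M J := by
  obtain ⟨⟨-, hJn, -⟩, hL, hR⟩ := hJ
  obtain ⟨-, hMn, -⟩ := hF.1 M hM
  have hadj k b := depth_lt_of_adjacent (k := k) (b := b) (fun M' hM' => hF.2 M' hM' M hM) hM
  rintro (⟨h1, h2, h3⟩ | ⟨h1, h2, h3⟩)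
  · have := hL (by omega) (M.2 + 1) (by omega) (by omega)
    have := hadj (J.1 - 1) (M.2 + 1) ⟨by omega, by omega⟩ (Or.inr rfl)
    simp only [neg_lt_neg_iff, Nat.cast_lt] at *
    omega
  · have := hR (by omega) (M.1 - 1) (by omega) (by omega)
    have := hadj (J.2 + 1) (M.1 - 1) ⟨by omega, by omega⟩ (Or.inl (by omega))
    simp only [neg_lt_neg_iff, Nat.cast_lt] at *
    omega

/-- The point is just right of the longest member `[J.1, j] ⊊ J`, if there is one. -/
lemma exists_mem_only_in_supersets (hF : IsNoncrossingFamily n F)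
    (hFJ : ∀ M ∈ F, ¬IntervalsCross M J) (hJ12 : J.1 ≤ J.2) (hJ : J ∉ F) :
    ∃ k, J.1 ≤ k ∧ k ≤ J.2 ∧
      ∀ M ∈ F, M.1 ≤ k → k ≤ M.2 → M.1 ≤ J.1 ∧ J.2 ≤ M.2 := by
  have hne : ∀ M ∈ F, ¬(M.1 = J.1 ∧ M.2 = J.2) := fun M hM h => hJ (Prod.ext h.1 h.2 ▸ hM)
  set T := F.filter fun M => M.1 = J.1 ∧ M.2 < J.2
  refine ⟨max J.1 (T.sup fun M => M.2 + 1), le_max_left _ _,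
    max_le hJ12 (Finset.sup_le fun M hM => ?_), fun M hM h1 h2 => ?_⟩
  · have := (mem_filter.1 hM).2
    omega
  have hMJ := hFJ M hM
  have hMJ' := hne M hM
  have hM12 := (hF.1 M hM).1
  unfold IntervalsCross at hMJ
  by_contra hsup
  rcases (by omega : M.1 = J.1 ∨ J.1 < M.1) with h | h
  · have hMT : M ∈ T := mem_filter.2 ⟨hM, h, by omega⟩
    have := le_sup (f := fun M : ℕ × ℕ => M.2 + 1) hMT
    omega
  · have hT : T.Nonempty := nonempty_iff_ne_empty.2 fun hT => by simp [hT] at h1; omega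
    obtain ⟨M₁, hM₁, heq⟩ := exists_mem_eq_sup T hT fun M => M.2 + 1
    have hM₁J := (mem_filter.1 hM₁).2
    have hMM₁ := hF.2 M hM M₁ (mem_filter.1 hM₁).1
    unfold IntervalsCross at hMM₁
    omega

/-- A member containing `J` and avoiding both neighbours would be `J`; two members containing `J`
and avoiding one neighbour each would cross. -/
lemma exists_boundary_mem_supersets (hF : IsNoncrossingFamily n F)
    (hJP : IsProperInterval n J) (hJ : J ∉ F) :
    ∃ b ≤ n, (b + 1 = J.1 ∨ b = J.2 + 1) ∧
      ∀ M ∈ F, M.1 ≤ J.1 → J.2 ≤ M.2 → M.1 ≤ b ∧ b ≤ M.2 := by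
  have hne : ∀ M ∈ F, ¬(M.1 = J.1 ∧ M.2 = J.2) := fun M hM h => hJ (Prod.ext h.1 h.2 ▸ hM)
  obtain ⟨hJ12, hJn, hJP⟩ := hJP
  by_contra! H
  rcases Nat.eq_zero_or_pos J.1 with h0 | h0
  · obtain ⟨M, hM, h1, h2, h3⟩ := H (J.2 + 1) (by omega) (Or.inr rfl)
    exact hne M hM (by omega)
  obtain ⟨M₁, hM₁, h1, h2, h3⟩ := H (J.1 - 1) (by omega) (Or.inl (by omega))
  have := (hF.1 M₁ hM₁).2.1
  rcases (by omega : J.2 = n ∨ J.2 < n) with hn | hn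
  · exact hne M₁ hM₁ (by omega)
  obtain ⟨M₂, hM₂, h4, h5, h6⟩ := H (J.2 + 1) hn (Or.inr rfl)
  have hM₁M₂ := hF.2 M₁ hM₁ M₂ hM₂
  unfold IntervalsCross at hM₁M₂
  rcases (by omega : (M₁.1 = J.1 ∧ M₁.2 = J.2) ∨ (M₂.1 = J.1 ∧ M₂.2 = J.2)) with h | h
  exacts [hne M₁ hM₁ h, hne M₂ hM₂ h]

lemma mem_of_isBasin_neg_depth (hF : IsNoncrossingFamily n F)
    (hJ : IsBasin n (fun k => -(depth F k : ℝ)) J) : J ∈ F := by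
  by_contra hJF
  obtain ⟨k, hk1, hk2, hk⟩ := exists_mem_only_in_supersets hF
    (fun M hM => not_intervalsCross_of_isBasin_neg_depth hF hJ hM) hJ.1.1 hJF
  obtain ⟨b, hbn, hb, hbM⟩ := exists_boundary_mem_supersets hF hJ.1 hJF
  have hle : depth F k ≤ depth F b := card_le_card fun M hM => by
    rw [mem_filter] at hM ⊢
    exact ⟨hM.1, hbM M hM.1 (hk M hM.1 hM.2.1 hM.2.2).1 (hk M hM.1 hM.2.1 hM.2.2).2⟩
  obtain ⟨⟨-, hJn, -⟩, hL, hR⟩ := hJ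
  rcases hb with hb | rfl
  · have := hL (by omega) k hk1 hk2
    rw [show J.1 - 1 = b by omega] at this
    simp only [neg_lt_neg_iff, Nat.cast_lt] at this
    omega
  · have := hR (by omega) k hk1 hk2
    simp only [neg_lt_neg_iff, Nat.cast_lt] at this
    omega

theorem basins_neg_depth (hF : IsNoncrossingFamily n F) :
    basins n (fun k => -(depth F k : ℝ)) = F := by
  ext M
  rw [mem_basins]
  exact ⟨mem_of_isBasin_neg_depth hF, isBasin_neg_depth_of_mem hF⟩

end Depth

section Faces

variable {n : ℕ}

def natFun (w : Fin (n+1) → ℝ) : ℕ → ℝ :=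
  fun k => if h : k < n + 1 then w ⟨k, h⟩ else 0

@[simp] lemma natFun_val (w : Fin (n+1) → ℝ) (k : Fin (n+1)) : natFun w k = w k :=
  dif_pos k.isLt

lemma dot_eVec (w : Fin (n+1) → ℝ) (k : Fin (n+1)) : dot w (eVec k) = w k := by
  simp [dot, eVec, Pi.single_apply]

lemma dot_sum_smul {ι : Type*} (s : Finset ι) (w : Fin (n+1) → ℝ) (c : ι → ℝ)
    (f : ι → Fin (n+1) → ℝ) :
    dot w (∑ p ∈ s, c p • f p) = ∑ p ∈ s, c p * dot w (f p) := by
  simp only [dot, Finset.sum_apply, Pi.smul_apply, smul_eq_mul, mul_sum]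
  rw [sum_comm]
  exact sum_congr rfl fun p _ => sum_congr rfl fun i _ => by ring

lemma eVec_mem_stdSimplexSeg {i j k : Fin (n+1)} (hik : i ≤ k) (hkj : k ≤ j) :
    eVec k ∈ stdSimplexSeg n i j :=
  subset_convexHull ℝ _ ⟨k, hik, hkj, rfl⟩

lemma stdSimplexSeg_subset (i j : Fin (n+1)) :
    stdSimplexSeg n i j ⊆
      stdSimplex ℝ (Fin (n+1)) ∩ {f | ∀ k, f k ≠ 0 → i ≤ k ∧ k ≤ j} := by
  refine convexHull_min ?_ ((convex_stdSimplex ℝ _).inter ?_)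
  · rintro _ ⟨k, hik, hkj, rfl⟩
    refine ⟨single_mem_stdSimplex ℝ k, fun l hl => ?_⟩
    rw [eVec, Pi.single_apply] at hl
    split_ifs at hl with h
    · exact h ▸ ⟨hik, hkj⟩
    · exact absurd rfl hl
  · intro f hf g hg a b _ _ _ l hl
    by_contra h
    have hf0 : f l = 0 := by_contra fun h' => h (hf l h')
    have hg0 : g l = 0 := by_contra fun h' => h (hg l h')
    simp [hf0, hg0] at hl

variable {w u f : Fin (n+1) → ℝ} {i j k : Fin (n+1)}

lemma sum_mul_of_mem_stdSimplexSeg (hf : f ∈ stdSimplexSeg n i j) (c : ℝ) :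
    ∑ l, c * f l = c := by
  rw [← mul_sum, (stdSimplexSeg_subset i j hf).1.2, mul_one]

lemma mul_le_of_mem_stdSimplexSeg (hf : f ∈ stdSimplexSeg n i j)
    (hk : (k : ℕ) ∈ argmaxIcc (natFun w) i j) (l : Fin (n+1)) :
    w l * f l ≤ w k * f l := by
  obtain ⟨⟨hf0, -⟩, hfs⟩ := stdSimplexSeg_subset i j hf
  rcases eq_or_ne (f l) 0 with h | h
  · simp [h]
  · refine mul_le_mul_of_nonneg_right ?_ (hf0 l)
    simpa using hk.2.2 l (hfs l h).1 (hfs l h).2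

lemma dot_le_of_mem_stdSimplexSeg (hf : f ∈ stdSimplexSeg n i j)
    (hk : (k : ℕ) ∈ argmaxIcc (natFun w) i j) : dot w f ≤ w k :=
  (sum_le_sum fun l _ => mul_le_of_mem_stdSimplexSeg hf hk l).trans_eq
    (sum_mul_of_mem_stdSimplexSeg hf _)

lemma mem_argmaxIcc_of_dot_eq (hf : f ∈ stdSimplexSeg n i j)
    (hk : (k : ℕ) ∈ argmaxIcc (natFun w) i j) (heq : dot w f = w k) {l : Fin (n+1)}
    (hl : f l ≠ 0) : (l : ℕ) ∈ argmaxIcc (natFun w) i j := by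
  have hterm := (sum_eq_sum_iff_of_le fun l _ => mul_le_of_mem_stdSimplexSeg hf hk l).1
    (heq.trans (sum_mul_of_mem_stdSimplexSeg hf _).symm) l (mem_univ l)
  have hsupp := (stdSimplexSeg_subset i j hf).2 l hl
  exact mem_argmaxIcc_of_le hsupp hk (by simpa using (mul_right_cancel₀ hl hterm).ge)

/-- `f` is supported on the argmax of `w`. -/
lemma dot_eq_of_argmaxIcc_subset (hf : f ∈ stdSimplexSeg n i j)
    (hk : (k : ℕ) ∈ argmaxIcc (natFun w) i j) (heq : dot w f = w k) {k' : Fin (n+1)}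
    (hk' : (k' : ℕ) ∈ argmaxIcc (natFun u) i j)
    (hsub : argmaxIcc (natFun w) i j ⊆ argmaxIcc (natFun u) i j) : dot u f = u k' := by
  refine (sum_congr rfl fun l _ => ?_).trans (sum_mul_of_mem_stdSimplexSeg hf _)
  rcases eq_or_ne (f l) 0 with h | h
  · simp [h]
  · have hl := hsub (mem_argmaxIcc_of_dot_eq hf hk heq h)
    have := argmaxIcc_apply_eq hl hk'
    simp only [natFun_val] at this
    rw [this]

end Faces

section AssIII

variable {n : ℕ} {a : Fin (n+1) × Fin (n+1) → ℝ} {w x : Fin (n+1) → ℝ}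

lemma mem_pairIdx {p : Fin (n+1) × Fin (n+1)} : p ∈ pairIdx n ↔ p.1 ≤ p.2 := by
  simp [pairIdx]

lemma exists_fin_mem_argmaxIcc (w : Fin (n+1) → ℝ) {p : Fin (n+1) × Fin (n+1)}
    (hp : p ∈ pairIdx n) : ∃ k : Fin (n+1), (k : ℕ) ∈ argmaxIcc (natFun w) p.1 p.2 := by
  obtain ⟨k, hk⟩ := argmaxIcc_nonempty (v := natFun w) (mem_pairIdx.1 hp)
  exact ⟨⟨k, hk.2.1.trans_lt p.2.isLt⟩, hk⟩

noncomputable def argmaxSel (w : Fin (n+1) → ℝ) (p : Fin (n+1) × Fin (n+1)) : Fin (n+1) :=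
  Classical.epsilon fun k : Fin (n+1) => (k : ℕ) ∈ argmaxIcc (natFun w) p.1 p.2

lemma argmaxSel_mem {p : Fin (n+1) × Fin (n+1)} (hp : p ∈ pairIdx n) :
    (argmaxSel w p : ℕ) ∈ argmaxIcc (natFun w) p.1 p.2 :=
  Classical.epsilon_spec (exists_fin_mem_argmaxIcc w hp)

noncomputable def maxValue (a : Fin (n+1) × Fin (n+1) → ℝ) (w : Fin (n+1) → ℝ) : ℝ :=
  ∑ p ∈ pairIdx n, a p * w (argmaxSel w p)

lemma dot_le_maxValue (ha : ∀ p : Fin (n+1) × Fin (n+1), p.1 ≤ p.2 → 0 < a p)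
    (hx : x ∈ AssIII n a) : dot w x ≤ maxValue a w := by
  obtain ⟨f, hf, rfl⟩ := hx
  rw [dot_sum_smul]
  exact sum_le_sum fun p hp => mul_le_mul_of_nonneg_left
    (dot_le_of_mem_stdSimplexSeg (hf p hp) (argmaxSel_mem hp)) (ha p (mem_pairIdx.1 hp)).le

lemma dot_sum_eq_maxValue_iff (ha : ∀ p : Fin (n+1) × Fin (n+1), p.1 ≤ p.2 → 0 < a p)
    {f : Fin (n+1) × Fin (n+1) → Fin (n+1) → ℝ}
    (hf : ∀ p ∈ pairIdx n, f p ∈ stdSimplexSeg n p.1 p.2) :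
    dot w (∑ p ∈ pairIdx n, a p • f p) = maxValue a w ↔
      ∀ p ∈ pairIdx n, dot w (f p) = w (argmaxSel w p) := by
  have hpos : ∀ p ∈ pairIdx n, 0 < a p := fun p hp => ha p (mem_pairIdx.1 hp)
  rw [dot_sum_smul, maxValue, sum_eq_sum_iff_of_le fun p hp => mul_le_mul_of_nonneg_left
    (dot_le_of_mem_stdSimplexSeg (hf p hp) (argmaxSel_mem hp)) (hpos p hp).le]
  exact forall₂_congr fun p hp => mul_right_inj' (hpos p hp).ne'

lemma exists_dot_eq_maxValue (ha : ∀ p : Fin (n+1) × Fin (n+1), p.1 ≤ p.2 → 0 < a p)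
    (w : Fin (n+1) → ℝ) : ∃ z ∈ AssIII n a, dot w z = maxValue a w := by
  have hs p (hp : p ∈ pairIdx n) : eVec (argmaxSel w p) ∈ stdSimplexSeg n p.1 p.2 :=
    eVec_mem_stdSimplexSeg (argmaxSel_mem hp).1 (argmaxSel_mem hp).2.1
  exact ⟨_, ⟨_, hs, rfl⟩, (dot_sum_eq_maxValue_iff ha hs).2 fun p _ => dot_eVec w _⟩

lemma mem_maxFace_iff (ha : ∀ p : Fin (n+1) × Fin (n+1), p.1 ≤ p.2 → 0 < a p) :
    x ∈ maxFace (AssIII n a) w ↔ x ∈ AssIII n a ∧ dot w x = maxValue a w := by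
  obtain ⟨z, hz, hzw⟩ := exists_dot_eq_maxValue ha w
  exact ⟨fun h => ⟨h.1, (dot_le_maxValue ha h.1).antisymm (hzw ▸ h.2 z hz)⟩,
    fun h => ⟨h.1, fun y hy => h.2 ▸ dot_le_maxValue ha hy⟩⟩

lemma maxFace_nonempty (ha : ∀ p : Fin (n+1) × Fin (n+1), p.1 ≤ p.2 → 0 < a p)
    (w : Fin (n+1) → ℝ) : (maxFace (AssIII n a) w).Nonempty := by
  obtain ⟨z, hz, hzw⟩ := exists_dot_eq_maxValue ha w
  exact ⟨z, (mem_maxFace_iff ha).2 ⟨hz, hzw⟩⟩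

theorem maxFace_subset_iff (ha : ∀ p : Fin (n+1) × Fin (n+1), p.1 ≤ p.2 → 0 < a p)
    (w u : Fin (n+1) → ℝ) :
    maxFace (AssIII n a) w ⊆ maxFace (AssIII n a) u ↔
      ∀ x y, y ≤ n → argmaxIcc (natFun w) x y ⊆ argmaxIcc (natFun u) x y := by
  constructor
  · -- in the vertex built from argmaxes of `w`, use `k` on `[x, y]`: it still maximizes `w`,
    -- hence `u`, which forces `k` to be an argmax of `u` on `[x, y]`
    rintro hsub x y hy k ⟨hxk, hky, hmax⟩
    let p₀ : Fin (n+1) × Fin (n+1) := (⟨x, by omega⟩, ⟨y, by omega⟩)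
    let k₀ : Fin (n+1) := ⟨k, by omega⟩
    have hk₀ : (k₀ : ℕ) ∈ argmaxIcc (natFun w) p₀.1 p₀.2 := ⟨hxk, hky, hmax⟩
    have hp₀ : p₀ ∈ pairIdx n := mem_pairIdx.2 (hxk.trans hky : x ≤ y)
    let g := Function.update (argmaxSel w) p₀ k₀
    have hg : ∀ p ∈ pairIdx n, (g p : ℕ) ∈ argmaxIcc (natFun w) p.1 p.2 := fun p hp => by
      rcases eq_or_ne p p₀ with rfl | hne
      · simpa [g] using hk₀
      · simpa [g, hne] using argmaxSel_mem hp
    have hs p (hp : p ∈ pairIdx n) : eVec (g p) ∈ stdSimplexSeg n p.1 p.2 :=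
      eVec_mem_stdSimplexSeg (hg p hp).1 (hg p hp).2.1
    have hz := hsub <| (mem_maxFace_iff ha).2 ⟨⟨_, hs, rfl⟩, (dot_sum_eq_maxValue_iff ha hs).2
      fun p hp => by simpa [dot_eVec] using argmaxIcc_apply_eq (hg p hp) (argmaxSel_mem hp)⟩
    have hu := (dot_sum_eq_maxValue_iff ha hs).1 ((mem_maxFace_iff ha).1 hz).2 p₀ hp₀
    exact mem_argmaxIcc_of_le (k := (k₀ : ℕ)) ⟨hxk, hky⟩ (argmaxSel_mem hp₀)
      (by simpa [g, dot_eVec] using hu.ge)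
  · intro h z hz
    obtain ⟨⟨f, hf, rfl⟩, hzw⟩ := (mem_maxFace_iff ha).1 hz
    refine (mem_maxFace_iff ha).2
      ⟨⟨f, hf, rfl⟩, (dot_sum_eq_maxValue_iff ha hf).2 fun p hp => ?_⟩
    exact dot_eq_of_argmaxIcc_subset (hf p hp) (argmaxSel_mem hp)
      ((dot_sum_eq_maxValue_iff ha hf).1 hzw p hp) (argmaxSel_mem hp)
      (h _ _ (Nat.lt_succ_iff.1 p.2.isLt))

end AssIII

section Diagonals

lemma pair_eq_pair_of_lt {α : Type*} [LinearOrder α] {a b c d : α} (hab : a < b) (hcd : c < d)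
    (h : ({a, b} : Finset α) = {c, d}) : a = c ∧ b = d := by
  have h1 : a ∈ ({c, d} : Finset α) := h ▸ by simp
  have h2 : b ∈ ({c, d} : Finset α) := h ▸ by simp
  have h3 : c ∈ ({a, b} : Finset α) := h ▸ by simp
  have h4 : d ∈ ({a, b} : Finset α) := h ▸ by simp
  simp only [mem_insert, mem_singleton] at h1 h2 h3 h4
  grind

lemma crosses_pair_iff {m : ℕ} {a b c d : Fin m} (hab : a < b) (hcd : c < d) :
    Crosses m {a, b} {c, d} ↔ (a < c ∧ c < b ∧ b < d) ∨ (c < a ∧ a < d ∧ d < b) := by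
  constructor
  · rintro ⟨p, q, r, s, hpq, hqr, hrs, ⟨h1, h2⟩ | ⟨h1, h2⟩⟩
    · obtain ⟨rfl, rfl⟩ := pair_eq_pair_of_lt hab (hpq.trans hqr) h1
      obtain ⟨rfl, rfl⟩ := pair_eq_pair_of_lt hcd (hqr.trans hrs) h2
      exact Or.inl ⟨hpq, hqr, hrs⟩
    · obtain ⟨rfl, rfl⟩ := pair_eq_pair_of_lt hab (hqr.trans hrs) h1
      obtain ⟨rfl, rfl⟩ := pair_eq_pair_of_lt hcd (hpq.trans hqr) h2
      exact Or.inr ⟨hpq, hqr, hrs⟩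
  · rintro (⟨h1, h2, h3⟩ | ⟨h1, h2, h3⟩)
    · exact ⟨a, c, b, d, h1, h2, h3, Or.inl ⟨rfl, rfl⟩⟩
    · exact ⟨c, a, d, b, h1, h2, h3, Or.inr ⟨rfl, rfl⟩⟩

lemma adjacent_iff_of_lt {m : ℕ} {a b : Fin m} (hab : a < b) :
    adjacent m a b ↔ (a : ℕ) + 1 = b ∨ ((a : ℕ) = 0 ∧ (b : ℕ) + 1 = m) := by
  have hab' : (a : ℕ) < b := hab
  have hb := b.isLt
  unfold adjacent
  rw [Nat.mod_eq_of_lt (by omega : (a : ℕ) + 1 < m)]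
  rcases (by omega : (b : ℕ) + 1 < m ∨ (b : ℕ) + 1 = m) with h | h
  · rw [Nat.mod_eq_of_lt h]
    omega
  · rw [h, Nat.mod_self]
    omega

def IsPartialTriangulation (m : ℕ) (D : Finset (Finset (Fin m))) : Prop :=
  (∀ d ∈ D, IsDiagonal m d) ∧ ∀ d ∈ D, ∀ e ∈ D, ¬Crosses m d e

def intervalDiagonal (n : ℕ) (M : ℕ × ℕ) : Finset (Fin (n+3)) :=
  {Fin.ofNat (n+3) M.1, Fin.ofNat (n+3) (M.2 + 2)}

lemma val_ofNat_of_lt {m a : ℕ} [NeZero m] (h : a < m) : (Fin.ofNat m a : ℕ) = a := by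
  rw [Fin.val_ofNat, Nat.mod_eq_of_lt h]

variable {n : ℕ} {M M' : ℕ × ℕ} {F F' : Finset (ℕ × ℕ)}

lemma intervalDiagonal_lt (hM : IsProperInterval n M) :
    Fin.ofNat (n+3) M.1 < Fin.ofNat (n+3) (M.2 + 2) := by
  obtain ⟨h1, h2, -⟩ := hM
  rw [Fin.lt_def, val_ofNat_of_lt (by omega), val_ofNat_of_lt (by omega)]
  omega

lemma isDiagonal_intervalDiagonal (hM : IsProperInterval n M) :
    IsDiagonal (n+3) (intervalDiagonal n M) := by
  refine ⟨_, _, (intervalDiagonal_lt hM).ne, ?_, rfl⟩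
  obtain ⟨h1, h2, h3⟩ := hM
  rw [adjacent_iff_of_lt (intervalDiagonal_lt ⟨h1, h2, h3⟩), val_ofNat_of_lt (by omega),
    val_ofNat_of_lt (by omega)]
  omega

lemma crosses_intervalDiagonal_iff (hM : IsProperInterval n M) (hM' : IsProperInterval n M') :
    Crosses (n+3) (intervalDiagonal n M) (intervalDiagonal n M') ↔ IntervalsCross M M' := by
  rw [intervalDiagonal, intervalDiagonal,
    crosses_pair_iff (intervalDiagonal_lt hM) (intervalDiagonal_lt hM')]
  obtain ⟨h1, h2, -⟩ := hM
  obtain ⟨h1', h2', -⟩ := hM'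
  simp only [Fin.lt_def, val_ofNat_of_lt (by omega : M.1 < n + 3),
    val_ofNat_of_lt (by omega : M.2 + 2 < n + 3), val_ofNat_of_lt (by omega : M'.1 < n + 3),
    val_ofNat_of_lt (by omega : M'.2 + 2 < n + 3)]
  unfold IntervalsCross
  omega

lemma intervalDiagonal_injOn : Set.InjOn (intervalDiagonal n) {M | IsProperInterval n M} := by
  intro M hM M' hM' h
  obtain ⟨h1, h2⟩ := pair_eq_pair_of_lt (intervalDiagonal_lt hM) (intervalDiagonal_lt hM') h
  obtain ⟨hM12, hMn, -⟩ := hM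
  obtain ⟨hM'12, hM'n, -⟩ := hM'
  replace h1 := congrArg Fin.val h1
  replace h2 := congrArg Fin.val h2
  rw [val_ofNat_of_lt (by omega : M.1 < n + 3), val_ofNat_of_lt (by omega : M'.1 < n + 3)] at h1
  rw [val_ofNat_of_lt (by omega : M.2 + 2 < n + 3),
    val_ofNat_of_lt (by omega : M'.2 + 2 < n + 3)] at h2
  exact Prod.ext h1 (by omega)

lemma exists_intervalDiagonal_eq {d : Finset (Fin (n+3))} (hd : IsDiagonal (n+3) d) :
    ∃ M, IsProperInterval n M ∧ intervalDiagonal n M = d := by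
  obtain ⟨a, b, hab, hadj, rfl⟩ := hd
  wlog h : a < b generalizing a b
  · rw [pair_comm]
    exact this b a hab.symm (fun h' => hadj h'.symm) (lt_of_le_of_ne (not_lt.1 h) hab.symm)
  rw [adjacent_iff_of_lt h] at hadj
  have hab' : (a : ℕ) < b := h
  have hb := b.isLt
  refine ⟨(a, b - 2), ⟨show (a : ℕ) ≤ b - 2 by omega, show (b : ℕ) - 2 ≤ n by omega,
    show ¬((a : ℕ) = 0 ∧ (b : ℕ) - 2 = n) by omega⟩, ?_⟩
  rw [intervalDiagonal, show (b : ℕ) - 2 + 2 = b by omega, Fin.ofNat_val_eq_self,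
    Fin.ofNat_val_eq_self]

lemma isPartialTriangulation_image (hF : IsNoncrossingFamily n F) :
    IsPartialTriangulation (n+3) (F.image (intervalDiagonal n)) := by
  simp only [IsPartialTriangulation, mem_image, forall_exists_index, and_imp,
    forall_apply_eq_imp_iff₂]
  exact ⟨fun M hM => isDiagonal_intervalDiagonal (hF.1 M hM), fun M hM M' hM' => by
    rw [crosses_intervalDiagonal_iff (hF.1 M hM) (hF.1 M' hM')]
    exact hF.2 M hM M' hM'⟩

lemma exists_isNoncrossingFamily_image_eq {D : Finset (Finset (Fin (n+3)))}
    (hD : IsPartialTriangulation (n+3) D) :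
    ∃ F, IsNoncrossingFamily n F ∧ F.image (intervalDiagonal n) = D := by
  choose! I hIP hI using fun d (hd : d ∈ D) => exists_intervalDiagonal_eq (hD.1 d hd)
  refine ⟨D.image I, ⟨?_, ?_⟩, ?_⟩
  · simpa only [mem_image, forall_exists_index, and_imp, forall_apply_eq_imp_iff₂] using hIP
  · simp only [mem_image, forall_exists_index, and_imp, forall_apply_eq_imp_iff₂]
    intro d hd e he
    rw [← crosses_intervalDiagonal_iff (hIP d hd) (hIP e he), hI d hd, hI e he]
    exact hD.2 d hd e he
  · rw [image_image, image_congr (f := intervalDiagonal n ∘ I) (g := id) fun d hd => hI d hd,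
      image_id]

lemma image_intervalDiagonal_subset_iff (hF : ∀ M ∈ F, IsProperInterval n M)
    (hF' : ∀ M ∈ F', IsProperInterval n M) :
    F.image (intervalDiagonal n) ⊆ F'.image (intervalDiagonal n) ↔ F ⊆ F' := by
  rw [← coe_subset, coe_image, coe_image, intervalDiagonal_injOn.image_subset_image_iff hF hF',
    coe_subset]

end Diagonals

variable {n : ℕ}

lemma natFun_neg_depth {F : Finset (ℕ × ℕ)} (hF : IsNoncrossingFamily n F) :
    natFun (fun k : Fin (n+1) => -(depth F k : ℝ)) = fun k => -(depth F k : ℝ) := by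
  funext k
  by_cases hk : k < n + 1
  · simp [natFun, hk]
  · simp only [natFun, hk, dite_false]
    rw [eq_comm, neg_eq_zero, Nat.cast_eq_zero, depth, card_eq_zero, filter_eq_empty_iff]
    exact fun M hM h => by have := (hF.1 M hM).2.1; omega

lemma maxFace_subset_iff_image_basins_subset {a : Fin (n+1) × Fin (n+1) → ℝ}
    (ha : ∀ p : Fin (n+1) × Fin (n+1), p.1 ≤ p.2 → 0 < a p) (w u : Fin (n+1) → ℝ) :
    maxFace (AssIII n a) w ⊆ maxFace (AssIII n a) u ↔
      (basins n (natFun u)).image (intervalDiagonal n) ⊆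
        (basins n (natFun w)).image (intervalDiagonal n) := by
  rw [maxFace_subset_iff ha, argmaxIcc_subset_iff_isBasin_imp, ← basins_subset_basins_iff,
    image_intervalDiagonal_subset_iff isNoncrossingFamily_basins.1 isNoncrossingFamily_basins.1]

lemma exists_image_basins_eq {D : Finset (Finset (Fin (n+3)))}
    (hD : IsPartialTriangulation (n+3) D) :
    ∃ w : Fin (n+1) → ℝ, (basins n (natFun w)).image (intervalDiagonal n) = D := by
  obtain ⟨F, hF, rfl⟩ := exists_isNoncrossingFamily_image_eq hD
  exact ⟨fun k => -(depth F k : ℝ), by rw [natFun_neg_depth hF, basins_neg_depth hF]⟩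

end Associahedron

theorem assIII_face_correspondence_general (n : ℕ)
    (a : Fin (n+1) × Fin (n+1) → ℝ)
    (ha : ∀ p : Fin (n+1) × Fin (n+1), p.1 ≤ p.2 → 0 < a p) :
    ∃ φ : {F : Set (Fin (n+1) → ℝ) // IsFaceOf (AssIII n a) F ∧ F.Nonempty} →
        {D : Finset (Finset (Fin (n+3))) // (∀ d ∈ D, IsDiagonal (n+3) d) ∧
          (∀ d ∈ D, ∀ e ∈ D, ¬ Crosses (n+3) d e)},
      Function.Bijective φ ∧
      (∀ F G : {F : Set (Fin (n+1) → ℝ) // IsFaceOf (AssIII n a) F ∧ F.Nonempty},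
        (F.1 ⊆ G.1 ↔ (φ G).1 ⊆ (φ F).1)) := by
  open Associahedron in
  exact exists_bijective_order_reversing_of_surjective
    (f := fun w => ⟨maxFace (AssIII n a) w, ⟨w, rfl⟩, maxFace_nonempty ha w⟩)
    (g := fun w => ⟨(basins n (natFun w)).image (intervalDiagonal n),
      isPartialTriangulation_image isNoncrossingFamily_basins⟩)
    (fun ⟨_, ⟨w, hw⟩, _⟩ => ⟨w, Subtype.ext hw.symm⟩)
    (fun ⟨_, hD⟩ => (exists_image_basins_eq hD).imp fun _ hw => Subtype.ext hw)
    (maxFace_subset_iff_image_basins_subset ha)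

/-- There is an (order-reversing) bijection `φ` from the
nonempty faces of `Ass_n^{III}(a)` onto the sets of pairwise non-crossing
diagonals of the `(n+3)`-gon: `F ⊆ G ↔ φ G ⊆ φ F`. In particular the vertices
correspond to triangulations and `Ass_n^{III}(a)` is an `n`-dimensional
associahedron. -/
theorem assIII_face_correspondence (n : ℕ) (hn : 1 ≤ n)
    (a : Fin (n+1) × Fin (n+1) → ℝ)
    (ha : ∀ p : Fin (n+1) × Fin (n+1), p.1 ≤ p.2 → 0 < a p) :
    ∃ φ : {F : Set (Fin (n+1) → ℝ) // IsFaceOf (AssIII n a) F ∧ F.Nonempty} →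
        {D : Finset (Finset (Fin (n+3))) // (∀ d ∈ D, IsDiagonal (n+3) d) ∧
          (∀ d ∈ D, ∀ e ∈ D, ¬ Crosses (n+3) d e)},
      Function.Bijective φ ∧
      (∀ F G : {F : Set (Fin (n+1) → ℝ) // IsFaceOf (AssIII n a) F ∧ F.Nonempty},
        (F.1 ⊆ G.1 ↔ (φ G).1 ⊆ (φ F).1)) :=
  assIII_face_correspondence_general n a ha
end

section
/- For every n ≥ 1 and every choice of positive parameters a = (a_{ij}), the polytope Ass_n^{III}(a) is contained in the hyperplane {x ∈ ℝ^{n+1} : x_1 + … + x_{n+1} = Σ_{1≤i≤j≤n+1} a_{ij}}, its affine span has dimension exactly n, and it is a simple polytope: every vertex of Ass_n^{III}(a) lies on exactly n facets. -/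
open Finset

/-!
The face of `Ass = ∑ a_{ij} Δ_{[i,j]}` maximizing a functional `u` is the Minkowski sum of the
faces `Δ_M` of the summands, `M` the set of maximizers of `u` on `[i,j]`; so its direction space
is spanned by the `e_k - e_l` with `k`, `l` maximizers of `u` on a common interval. A colouring
of the coordinates that no such maximizer set meets in two colours bounds the dimension of this
space by `n + 1 - #colours`, with equality when these sets link up each colour class. With one
colour this gives `dim Ass = n`. For a facet normal `u`, three-colourings rule out three values of
`u` and a higher value between two lower ones, so `u` orders the coordinates like `-𝟙_J` for a
proper interval `J`: the facets are the faces `F_J` maximizing `-𝟙_J`.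

A vertex is the face of a functional `w` with a unique maximizer `g q` on every interval `q`. It
lies on `F_J` iff every interval whose maximizer lies in `J` is contained in `J`, i.e. iff `J` is
spanned by a subtree of the Cartesian tree of `w`. Then `J ↦ g J` is a bijection from these
intervals onto the `n + 1` coordinates; discarding the whole segment leaves `n` facets.
-/

section argmaxOn

variable {α β : Type*} [LinearOrder β]

open Classical in
noncomputable def argmaxOn (w : α → β) (S : Finset α) : Finset α :=
  {k ∈ S | IsMaxOn w S k}

theorem mem_argmaxOn {w : α → β} {S : Finset α} {k : α} :
    k ∈ argmaxOn w S ↔ k ∈ S ∧ ∀ l ∈ S, w l ≤ w k := by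
  classical
  simp [argmaxOn, IsMaxOn, IsMaxFilter, Filter.eventually_principal]

theorem argmaxOn_subset (w : α → β) (S : Finset α) : argmaxOn w S ⊆ S :=
  fun _ hk => (mem_argmaxOn.1 hk).1

theorem argmaxOn_nonempty (w : α → β) {S : Finset α} (hS : S.Nonempty) :
    (argmaxOn w S).Nonempty := by
  obtain ⟨k, hk, hmax⟩ := S.exists_max_image w hS
  exact ⟨k, mem_argmaxOn.2 ⟨hk, hmax⟩⟩

theorem apply_eq_of_mem_argmaxOn {w : α → β} {S : Finset α} {k l : α} (hk : k ∈ argmaxOn w S)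
    (hl : l ∈ argmaxOn w S) : w k = w l :=
  le_antisymm ((mem_argmaxOn.1 hl).2 k (mem_argmaxOn.1 hk).1)
    ((mem_argmaxOn.1 hk).2 l (mem_argmaxOn.1 hl).1)

theorem argmaxOn_congr {γ : Type*} [LinearOrder γ] {w : α → β} {w' : α → γ}
    (h : ∀ k l, w k ≤ w l ↔ w' k ≤ w' l) (S : Finset α) : argmaxOn w S = argmaxOn w' S := by
  ext k
  simp only [mem_argmaxOn, h]

theorem argmaxOn_of_forall_eq {w : α → β} (h : ∀ k l, w k = w l) (S : Finset α) :
    argmaxOn w S = S := by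
  ext k
  simp [mem_argmaxOn, h _ k]

end argmaxOn

/-- `-𝟙_T`, the outer normal of the facet of `Ass_n^{III}` labelled by the interval `T`. -/
noncomputable def facetNormal {m : ℕ} (T : Finset (Fin m)) : Fin m → ℝ :=
  fun k => if k ∈ T then -1 else 0

theorem mem_argmaxOn_facetNormal {m : ℕ} {T S : Finset (Fin m)} {k : Fin m} :
    k ∈ argmaxOn (facetNormal T) S ↔ k ∈ S ∧ (k ∈ T → S ⊆ T) := by
  simp only [mem_argmaxOn, facetNormal]
  constructor
  · rintro ⟨hkS, hmax⟩
    refine ⟨hkS, fun hkT l hlS => ?_⟩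
    by_contra hlT
    have := hmax l hlS
    norm_num [hkT, hlT] at this
  · rintro ⟨hkS, hsub⟩
    refine ⟨hkS, fun l hlS => ?_⟩
    by_cases hkT : k ∈ T
    · simp [hkT, hsub hkT hlS]
    · split_ifs <;> norm_num

section dot

variable {m : ℕ}

theorem eVec_apply (k i : Fin m) : eVec k i = if i = k then 1 else 0 := Pi.single_apply k 1 i

theorem dot_smul (w x : Fin m → ℝ) (c : ℝ) : dot w (c • x) = c * dot w x :=
  dotProduct_smul c w x

theorem dot_sum {ι : Type*} (w : Fin m → ℝ) (s : Finset ι) (f : ι → Fin m → ℝ) :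
    dot w (∑ p ∈ s, f p) = ∑ p ∈ s, dot w (f p) :=
  dotProduct_sum w s f

theorem dot_eVec (w : Fin m → ℝ) (k : Fin m) : dot w (eVec k) = w k := by
  change w ⬝ᵥ Pi.single k 1 = w k
  simp

theorem dot_sub (w x y : Fin m → ℝ) : dot w (x - y) = dot w x - dot w y :=
  dotProduct_sub w x y

end dot

/-- The face `conv {e k | k ∈ S}` of the standard simplex, in coordinates. -/
def stdSimplexOn {m : ℕ} (S : Finset (Fin m)) : Set (Fin m → ℝ) :=
  {y | (∀ k, 0 ≤ y k) ∧ (∀ k ∉ S, y k = 0) ∧ ∑ k, y k = 1}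

namespace stdSimplexOn

variable {m : ℕ} {S T : Finset (Fin m)} {y y' : Fin m → ℝ}

theorem eVec_mem {k : Fin m} (hk : k ∈ S) : eVec k ∈ stdSimplexOn S := by
  refine ⟨fun i => ?_, fun i hi => ?_, ?_⟩
  · rw [eVec_apply]; split_ifs <;> norm_num
  · rw [eVec_apply, if_neg (by rintro rfl; exact hi hk)]
  · simp [eVec]

theorem mono (h : S ⊆ T) : stdSimplexOn S ⊆ stdSimplexOn T :=
  fun _ ⟨h0, hS, h1⟩ => ⟨h0, fun k hk => hS k (fun hkS => hk (h hkS)), h1⟩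

theorem convex : Convex ℝ (stdSimplexOn S) := by
  rintro y ⟨hy0, hyS, hy1⟩ y' ⟨hy0', hyS', hy1'⟩ a b ha hb hab
  refine ⟨fun k => ?_, fun k hk => ?_, ?_⟩
  · simp only [Pi.add_apply, Pi.smul_apply, smul_eq_mul]
    exact add_nonneg (mul_nonneg ha (hy0 k)) (mul_nonneg hb (hy0' k))
  · simp [hyS k hk, hyS' k hk]
  · simp [Finset.sum_add_distrib, ← Finset.mul_sum, hy1, hy1', hab]

theorem _root_.convexHull_eVec_image (S : Finset (Fin m)) :
    convexHull ℝ (eVec '' ↑S) = stdSimplexOn S := by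
  refine subset_antisymm (convexHull_min ?_ convex) fun y ⟨hy0, hyS, hy1⟩ => ?_
  · rintro _ ⟨k, hk, rfl⟩
    exact eVec_mem hk
  have hsum : ∑ k ∈ S, y k = 1 := by
    rwa [Finset.sum_subset (Finset.subset_univ S) fun k _ hk => hyS k hk]
  have hy : y = ∑ k ∈ S, y k • eVec k := by
    rw [Finset.sum_subset (Finset.subset_univ S) fun k _ hk => by rw [hyS k hk, zero_smul]]
    exact pi_eq_sum_univ' y
  rw [hy]
  exact (convex_convexHull ℝ _).sum_mem (fun k _ => hy0 k) hsum
    fun k hk => subset_convexHull ℝ _ ⟨k, hk, rfl⟩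

theorem dot_le {w : Fin m → ℝ} {b : ℝ} (hy : y ∈ stdSimplexOn S) (h : ∀ k ∈ S, w k ≤ b) :
    dot w y ≤ b := by
  obtain ⟨hy0, hyS, hy1⟩ := hy
  calc dot w y = ∑ k, w k * y k := rfl
    _ ≤ ∑ k, b * y k := Finset.sum_le_sum fun k _ => by
        by_cases hk : k ∈ S
        · exact mul_le_mul_of_nonneg_right (h k hk) (hy0 k)
        · simp [hyS k hk]
    _ = b := by rw [← Finset.mul_sum, hy1, mul_one]

theorem dot_eq {w : Fin m → ℝ} {b : ℝ} (hy : y ∈ stdSimplexOn S) (h : ∀ k ∈ S, w k = b) :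
    dot w y = b := by
  have hle := dot_le (w := -w) hy fun k hk => neg_le_neg_iff.2 (h k hk).ge
  have hneg : dot (-w) y = -dot w y := neg_dotProduct w y
  linarith [dot_le hy fun k hk => (h k hk).le]

theorem dot_eq_iff {w : Fin m → ℝ} {k : Fin m} (hy : y ∈ stdSimplexOn S)
    (hk : k ∈ argmaxOn w S) : dot w y = w k ↔ y ∈ stdSimplexOn (argmaxOn w S) := by
  refine ⟨fun h => ⟨hy.1, fun l hl => ?_, hy.2.2⟩,
    fun h => dot_eq h fun l hl => apply_eq_of_mem_argmaxOn hl hk⟩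
  obtain ⟨hy0, hyS, hy1⟩ := hy
  by_cases hlS : l ∈ S
  swap
  · exact hyS l hlS
  have hslack : ∑ i, (w k - w i) * y i = 0 := by
    simp only [sub_mul, Finset.sum_sub_distrib, ← Finset.mul_sum, hy1, mul_one]
    exact sub_eq_zero.2 h.symm
  have hnonneg : ∀ i ∈ Finset.univ, 0 ≤ (w k - w i) * y i := fun i _ => by
    by_cases hiS : i ∈ S
    · exact mul_nonneg (sub_nonneg.2 ((mem_argmaxOn.1 hk).2 i hiS)) (hy0 i)
    · simp [hyS i hiS]
  have hlt : w l < w k := by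
    by_contra hge
    exact hl (mem_argmaxOn.2 ⟨hlS, fun i hi =>
      ((mem_argmaxOn.1 hk).2 i hi).trans (not_lt.1 hge)⟩)
  have := (Finset.sum_eq_zero_iff_of_nonneg hnonneg).1 hslack l (Finset.mem_univ l)
  exact (mul_eq_zero.1 this).resolve_left (sub_ne_zero.2 hlt.ne')

end stdSimplexOn

theorem eVec_injective {m : ℕ} : Function.Injective (eVec (k := m)) := fun k l h => by
  by_contra hkl
  simpa [eVec_apply, hkl] using congrFun h k

theorem eVec_mem_stdSimplexOn_iff {m : ℕ} {S : Finset (Fin m)} {k : Fin m} :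
    eVec k ∈ stdSimplexOn S ↔ k ∈ S := by
  refine ⟨fun h => ?_, stdSimplexOn.eVec_mem⟩
  by_contra hk
  simpa [eVec_apply] using h.2.1 k hk

theorem spanDiff_singleton {m : ℕ} (v : Fin m → ℝ) : spanDiff {v} = ⊥ := by
  rw [spanDiff, Submodule.span_eq_bot]
  rintro _ ⟨u, hu, u', hu', rfl⟩
  rw [Set.mem_singleton_iff] at hu hu'
  rw [hu, hu', sub_self]

theorem Finset.sum_smul_update_sub {ι V : Type*} [DecidableEq ι] [AddCommGroup V] [Module ℝ V]
    {s : Finset ι} {p : ι} (hp : p ∈ s) (a : ι → ℝ) (f : ι → V) (z : V) :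
    ∑ q ∈ s, a q • Function.update f p z q - ∑ q ∈ s, a q • f q = a p • (z - f p) := by
  rw [← Finset.sum_sub_distrib, Finset.sum_eq_single_of_mem p hp, Function.update_self, smul_sub]
  intro q _ hq
  rw [Function.update_of_ne hq, sub_self]

section simplexSum

variable {m : ℕ} {ι : Type*}

def simplexSum (s : Finset ι) (a : ι → ℝ) (S : ι → Finset (Fin m)) : Set (Fin m → ℝ) :=
  {x | ∃ f : ι → Fin m → ℝ, (∀ p ∈ s, f p ∈ stdSimplexOn (S p)) ∧ x = ∑ p ∈ s, a p • f p}

noncomputable def vertexPoint (s : Finset ι) (a : ι → ℝ) (g : ι → Fin m) : Fin m → ℝ :=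
  ∑ p ∈ s, a p • eVec (g p)

def edgeSpan (s : Finset ι) (S : ι → Finset (Fin m)) : Submodule ℝ (Fin m → ℝ) :=
  Submodule.span ℝ {z | ∃ p ∈ s, ∃ k ∈ S p, ∃ l ∈ S p, z = eVec k - eVec l}

variable {s : Finset ι} {a : ι → ℝ} {S : ι → Finset (Fin m)}

theorem sub_mem_edgeSpan {p : ι} (hp : p ∈ s) {y y' : Fin m → ℝ} (hy : y ∈ stdSimplexOn (S p))
    (hy' : y' ∈ stdSimplexOn (S p)) : y - y' ∈ edgeSpan s S := by
  obtain ⟨k₀, hk₀⟩ : ∃ k₀, k₀ ∈ S p := by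
    by_contra! h
    simpa [hy.2.1 _ (h _)] using hy.2.2
  have hsum : ∑ k, (y k - y' k) = 0 := by
    rw [Finset.sum_sub_distrib, hy.2.2, hy'.2.2, sub_self]
  have hrepr : y - y' = ∑ k, (y k - y' k) • (eVec k - eVec k₀) := by
    simp only [smul_sub, Finset.sum_sub_distrib, ← Finset.sum_smul, hsum, zero_smul, sub_zero]
    exact pi_eq_sum_univ' (y - y')
  rw [hrepr]
  refine Submodule.sum_mem _ fun k _ => ?_
  by_cases hk : k ∈ S p
  · exact Submodule.smul_mem _ _ (Submodule.subset_span ⟨p, hp, k, hk, k₀, hk₀, rfl⟩)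
  · simp [hy.2.1 k hk, hy'.2.1 k hk]

namespace simplexSum

theorem sum_coords {x : Fin m → ℝ} (hx : x ∈ simplexSum s a S) : ∑ i, x i = ∑ p ∈ s, a p := by
  obtain ⟨f, hf, rfl⟩ := hx
  simp only [Finset.sum_apply, Pi.smul_apply, smul_eq_mul]
  rw [Finset.sum_comm]
  refine Finset.sum_congr rfl fun p hp => ?_
  rw [← Finset.mul_sum, (hf p hp).2.2, mul_one]

theorem mono {T : ι → Finset (Fin m)} (h : ∀ p ∈ s, S p ⊆ T p) :
    simplexSum s a S ⊆ simplexSum s a T := by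
  rintro _ ⟨f, hf, rfl⟩
  exact ⟨f, fun p hp => stdSimplexOn.mono (h p hp) (hf p hp), rfl⟩

theorem vertexPoint_mem {g : ι → Fin m} (hg : ∀ p ∈ s, g p ∈ S p) :
    vertexPoint s a g ∈ simplexSum s a S :=
  ⟨fun p => eVec (g p), fun p hp => stdSimplexOn.eVec_mem (hg p hp), rfl⟩

theorem exists_summands (hS : ∀ p ∈ s, (S p).Nonempty) :
    ∃ f : ι → Fin m → ℝ, ∀ p ∈ s, f p ∈ stdSimplexOn (S p) := by
  have : ∀ p ∈ s, ∃ y, y ∈ stdSimplexOn (S p) := fun p hp =>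
    ⟨_, stdSimplexOn.eVec_mem (hS p hp).choose_spec⟩
  choose! f hf using this
  exact ⟨f, hf⟩

theorem update_eVec_mem [DecidableEq ι] {f : ι → Fin m → ℝ}
    (hf : ∀ q ∈ s, f q ∈ stdSimplexOn (S q)) {p : ι} {k : Fin m} (hk : k ∈ S p) :
    ∀ q ∈ s, Function.update f p (eVec k) q ∈ stdSimplexOn (S q) := by
  intro q hq
  by_cases hqp : q = p
  · subst hqp
    rw [Function.update_self]
    exact stdSimplexOn.eVec_mem hk
  · rw [Function.update_of_ne hqp]
    exact hf q hq

variable (ha : ∀ p ∈ s, 0 < a p) (hS : ∀ p ∈ s, (S p).Nonempty)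
include ha hS

theorem mem_stdSimplexOn_argmaxOn_of_mem_maxFace {w : Fin m → ℝ} {f : ι → Fin m → ℝ}
    (hf : ∀ p ∈ s, f p ∈ stdSimplexOn (S p))
    (hx : ∑ p ∈ s, a p • f p ∈ maxFace (simplexSum s a S) w) {p : ι} (hp : p ∈ s) :
    f p ∈ stdSimplexOn (argmaxOn w (S p)) := by
  classical
  obtain ⟨k, hk⟩ := argmaxOn_nonempty w (hS p hp)
  by_contra hfp
  have hlt : dot w (f p) < w k :=
    lt_of_le_of_ne (stdSimplexOn.dot_le (hf p hp) (mem_argmaxOn.1 hk).2)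
      fun h => hfp ((stdSimplexOn.dot_eq_iff (hf p hp) hk).1 h)
  -- replacing `f p` by the vertex `e k` strictly increases `⟨w, ·⟩`
  have hgain := hx.2 _ ⟨_, update_eVec_mem hf (argmaxOn_subset w _ hk), rfl⟩
  have hdiff := congrArg (dot w) (Finset.sum_smul_update_sub hp a f (eVec k))
  rw [dot_sub, dot_smul, dot_sub, dot_eVec] at hdiff
  nlinarith [ha p hp]

theorem maxFace_eq (w : Fin m → ℝ) :
    maxFace (simplexSum s a S) w = simplexSum s a (fun p => argmaxOn w (S p)) := by
  ext x
  constructor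
  · rintro hx
    obtain ⟨f, hf, rfl⟩ := hx.1
    exact ⟨f, fun p hp => mem_stdSimplexOn_argmaxOn_of_mem_maxFace ha hS hf hx hp, rfl⟩
  · rintro ⟨f, hf, rfl⟩
    refine ⟨mono (fun p _ => argmaxOn_subset w _) ⟨f, hf, rfl⟩, ?_⟩
    rintro _ ⟨f', hf', rfl⟩
    rw [dot_sum, dot_sum]
    refine Finset.sum_le_sum fun p hp => ?_
    obtain ⟨k, hk⟩ := argmaxOn_nonempty w (hS p hp)
    rw [dot_smul, dot_smul,
      stdSimplexOn.dot_eq (hf p hp) fun l hl => apply_eq_of_mem_argmaxOn hl hk]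
    exact mul_le_mul_of_nonneg_left (stdSimplexOn.dot_le (hf' p hp) (mem_argmaxOn.1 hk).2)
      (ha p hp).le

theorem vertexPoint_mem_maxFace_iff {w : Fin m → ℝ} {g : ι → Fin m} (hg : ∀ p ∈ s, g p ∈ S p) :
    vertexPoint s a g ∈ maxFace (simplexSum s a S) w ↔ ∀ p ∈ s, g p ∈ argmaxOn w (S p) := by
  refine ⟨fun h p hp => ?_, fun h => ?_⟩
  · exact eVec_mem_stdSimplexOn_iff.1 (mem_stdSimplexOn_argmaxOn_of_mem_maxFace ha hS
      (fun q hq => stdSimplexOn.eVec_mem (hg q hq)) h hp)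
  · rw [maxFace_eq ha hS]
    exact vertexPoint_mem h

theorem argmaxOn_subset_of_maxFace_subset {w w' : Fin m → ℝ}
    (h : maxFace (simplexSum s a S) w ⊆ maxFace (simplexSum s a S) w') {p : ι} (hp : p ∈ s) :
    argmaxOn w (S p) ⊆ argmaxOn w' (S p) := by
  classical
  intro k hk
  obtain ⟨f, hf⟩ := exists_summands fun q hq => argmaxOn_nonempty w (hS q hq)
  have hupd := update_eVec_mem hf hk
  have hx : ∑ q ∈ s, a q • Function.update f p (eVec k) q ∈ maxFace (simplexSum s a S) w := by
    rw [maxFace_eq ha hS]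
    exact ⟨_, hupd, rfl⟩
  have := mem_stdSimplexOn_argmaxOn_of_mem_maxFace ha hS
    (fun q hq => stdSimplexOn.mono (argmaxOn_subset w _) (hupd q hq)) (h hx) hp
  rwa [Function.update_self, eVec_mem_stdSimplexOn_iff] at this

theorem spanDiff_eq : spanDiff (simplexSum s a S) = edgeSpan s S := by
  classical
  apply le_antisymm
  · refine Submodule.span_le.2 ?_
    rintro _ ⟨_, ⟨f, hf, rfl⟩, _, ⟨f', hf', rfl⟩, rfl⟩
    rw [← Finset.sum_sub_distrib]
    refine Submodule.sum_mem _ fun p hp => ?_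
    rw [← smul_sub]
    exact Submodule.smul_mem _ _ (sub_mem_edgeSpan hp (hf p hp) (hf' p hp))
  · refine Submodule.span_le.2 ?_
    rintro _ ⟨p, hp, k, hk, l, hl, rfl⟩
    obtain ⟨f, hf⟩ := exists_summands hS
    have hkl := Finset.sum_smul_update_sub hp a f (eVec k)
    have hl' := Finset.sum_smul_update_sub hp a f (eVec l)
    have hdiff : ∑ q ∈ s, a q • Function.update f p (eVec k) q -
        ∑ q ∈ s, a q • Function.update f p (eVec l) q = a p • (eVec k - eVec l) := by
      rw [← sub_sub_sub_cancel_right _ _ (∑ q ∈ s, a q • f q), hkl, hl', ← smul_sub,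
        sub_sub_sub_cancel_right]
    rw [← inv_smul_smul₀ (ha p hp).ne' (eVec k - eVec l), ← hdiff]
    exact Submodule.smul_mem _ _ (Submodule.subset_span
      ⟨_, ⟨_, update_eVec_mem hf hk, rfl⟩, _, ⟨_, update_eVec_mem hf hl, rfl⟩, rfl⟩)

theorem argmaxOn_subsingleton_of_maxFace_eq_singleton {w v : Fin m → ℝ}
    (hv : maxFace (simplexSum s a S) w = {v}) {p : ι} (hp : p ∈ s) {k l : Fin m}
    (hk : k ∈ argmaxOn w (S p)) (hl : l ∈ argmaxOn w (S p)) : k = l := by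
  have hspan := spanDiff_singleton v
  rw [← hv, maxFace_eq ha hS, spanDiff_eq ha fun q hq => argmaxOn_nonempty w (hS q hq)] at hspan
  have hmem : eVec k - eVec l ∈ edgeSpan s fun q => argmaxOn w (S q) :=
    Submodule.subset_span ⟨p, hp, k, hk, l, hl, rfl⟩
  rw [hspan, Submodule.mem_bot, sub_eq_zero] at hmem
  exact eVec_injective hmem

end simplexSum

end simplexSum

section blockSum

variable {m : ℕ} {κ : Type*} [DecidableEq κ]

def blockSum (c : Fin m → κ) : (Fin m → ℝ) →ₗ[ℝ] (κ → ℝ) where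
  toFun x i := ∑ k with c k = i, x k
  map_add' _ _ := funext fun _ => Finset.sum_add_distrib
  map_smul' _ _ := funext fun _ => (Finset.mul_sum _ _ _).symm

theorem blockSum_eVec (c : Fin m → κ) (k : Fin m) : blockSum c (eVec k) = Pi.single (c k) 1 := by
  funext i
  change ∑ l with c l = i, Pi.single k (1 : ℝ) l = (Pi.single (c k) 1 : κ → ℝ) i
  rw [Finset.sum_pi_single']
  simp [Pi.single_apply, eq_comm]

theorem finrank_ker_blockSum_add_card [Fintype κ] {c : Fin m → κ} (hc : Function.Surjective c) :
    Module.finrank ℝ (LinearMap.ker (blockSum c)) + Fintype.card κ = m := by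
  have hsurj : Function.Surjective (blockSum c) := fun y =>
    ⟨∑ i, y i • eVec (Function.surjInv hc i), by
      simp only [map_sum, map_smul, blockSum_eVec, Function.surjInv_eq hc]
      exact (pi_eq_sum_univ' y).symm⟩
  have := LinearMap.finrank_range_add_finrank_ker (blockSum c)
  rw [LinearMap.range_eq_top.2 hsurj, finrank_top, Module.finrank_fintype_fun_eq_card,
    Module.finrank_fin_fun] at this
  omega

variable {ι : Type*} {s : Finset ι} {S : ι → Finset (Fin m)}

theorem edgeSpan_le_ker_blockSum {c : Fin m → κ}
    (hc : ∀ p ∈ s, ∀ k ∈ S p, ∀ l ∈ S p, c k = c l) :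
    edgeSpan s S ≤ LinearMap.ker (blockSum c) := by
  refine Submodule.span_le.2 ?_
  rintro _ ⟨p, hp, k, hk, l, hl, rfl⟩
  rw [SetLike.mem_coe, LinearMap.mem_ker, map_sub, blockSum_eVec, blockSum_eVec,
    hc p hp k hk l hl, sub_self]

theorem ker_blockSum_le_edgeSpan [Fintype κ] {c : Fin m → κ} (hc : Function.Surjective c)
    (hconn : ∀ k l, c k = c l → ∃ p ∈ s, k ∈ S p ∧ l ∈ S p) :
    LinearMap.ker (blockSum c) ≤ edgeSpan s S := by
  intro x hx
  set ρ := Function.surjInv hc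
  -- subtracting from each `e k` the representative of its colour class costs nothing on the kernel
  have hrepr : x = ∑ k, x k • (eVec k - eVec (ρ (c k))) := by
    have hfib : ∑ k, x k • eVec (ρ (c k)) = 0 := by
      rw [← Finset.sum_fiberwise Finset.univ c]
      refine Finset.sum_eq_zero fun i _ => ?_
      rw [Finset.sum_congr rfl fun k hk => by rw [(Finset.mem_filter.1 hk).2], ← Finset.sum_smul]
      exact smul_eq_zero_of_left (congrFun hx i) _
    simp only [smul_sub, Finset.sum_sub_distrib, hfib, sub_zero]
    exact pi_eq_sum_univ' x
  rw [hrepr]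
  refine Submodule.sum_mem _ fun k _ => Submodule.smul_mem _ _ ?_
  obtain ⟨p, hp, hk, hl⟩ := hconn k (ρ (c k)) (Function.surjInv_eq hc _).symm
  exact Submodule.subset_span ⟨p, hp, k, hk, _, hl, rfl⟩

theorem finrank_edgeSpan_add_card_le [Fintype κ] {c : Fin m → κ} (hc : Function.Surjective c)
    (hmono : ∀ p ∈ s, ∀ k ∈ S p, ∀ l ∈ S p, c k = c l) :
    Module.finrank ℝ (edgeSpan s S) + Fintype.card κ ≤ m := by
  have := Submodule.finrank_mono (edgeSpan_le_ker_blockSum hmono)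
  have := finrank_ker_blockSum_add_card hc
  omega

theorem finrank_edgeSpan_add_card [Fintype κ] {c : Fin m → κ} (hc : Function.Surjective c)
    (hmono : ∀ p ∈ s, ∀ k ∈ S p, ∀ l ∈ S p, c k = c l)
    (hconn : ∀ k l, c k = c l → ∃ p ∈ s, k ∈ S p ∧ l ∈ S p) :
    Module.finrank ℝ (edgeSpan s S) + Fintype.card κ = m := by
  rw [le_antisymm (edgeSpan_le_ker_blockSum hmono) (ker_blockSum_le_edgeSpan hc hconn),
    finrank_ker_blockSum_add_card hc]

end blockSum

section order

variable {α : Type*} [LinearOrder α] [LocallyFiniteOrder α]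

theorem left_mem_Icc_inf_sup (k l : α) : k ∈ Icc (k ⊓ l) (k ⊔ l) :=
  Finset.mem_Icc.2 ⟨inf_le_left, le_sup_left⟩

theorem right_mem_Icc_inf_sup (k l : α) : l ∈ Icc (k ⊓ l) (k ⊔ l) :=
  Finset.mem_Icc.2 ⟨inf_le_right, le_sup_right⟩

theorem lt_iff_lt_of_mem_Icc {a b k l x : α} (hk : k ∈ Icc a b) (hl : l ∈ Icc a b)
    (hx : x ∉ Icc a b) : k < x ↔ l < x := by
  rw [Finset.mem_Icc] at hk hl hx
  constructor <;> intro h <;> by_contra! h'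
  · exact hx ⟨hk.1.trans h.le, h'.trans hl.2⟩
  · exact hx ⟨hl.1.trans h.le, h'.trans hk.2⟩

theorem mem_Icc_or_mem_Icc_of_mem_Icc_inf_sup {a b c d x k : α} (hx : x ∈ Icc a b)
    (hx' : x ∈ Icc c d) (hk : k ∈ Icc (a ⊓ c) (b ⊔ d)) : k ∈ Icc a b ∨ k ∈ Icc c d := by
  simp only [Finset.mem_Icc, inf_le_iff, le_sup_iff] at *
  rcases le_total k x with hkx | hxk
  · rcases hk.1 with h | h
    · exact .inl ⟨h, hkx.trans hx.2⟩
    · exact .inr ⟨h, hkx.trans hx'.2⟩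
  · rcases hk.2 with h | h
    · exact .inl ⟨hx.1.trans hxk, h⟩
    · exact .inr ⟨hx'.1.trans hxk, h⟩

end order

section intervals

variable {n : ℕ}

theorem mem_pairIdx {p : Fin (n+1) × Fin (n+1)} : p ∈ pairIdx n ↔ p.1 ≤ p.2 := by
  simp [pairIdx]

theorem nonempty_Icc_of_mem_pairIdx {p : Fin (n+1) × Fin (n+1)} (hp : p ∈ pairIdx n) :
    (Icc p.1 p.2).Nonempty :=
  Finset.nonempty_Icc.2 (mem_pairIdx.1 hp)

theorem inf_sup_mem_pairIdx (k l : Fin (n+1)) : (k ⊓ l, k ⊔ l) ∈ pairIdx n :=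
  mem_pairIdx.2 inf_le_sup

theorem eq_of_Icc_eq {J J' : Fin (n+1) × Fin (n+1)} (hJ : J ∈ pairIdx n) (hJ' : J' ∈ pairIdx n)
    (h : Icc J.1 J.2 = Icc J'.1 J'.2) : J = J' := by
  rw [mem_pairIdx] at hJ hJ'
  have h₁ := (Finset.Icc_subset_Icc_iff hJ).1 h.le
  have h₂ := (Finset.Icc_subset_Icc_iff hJ').1 h.ge
  exact Prod.ext (le_antisymm h₂.1 h₁.1) (le_antisymm h₁.2 h₂.2)

theorem Icc_zero_last : Icc (0 : Fin (n+1)) (Fin.last n) = univ :=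
  Finset.eq_univ_of_forall fun k => Finset.mem_Icc.2 ⟨Fin.zero_le k, Fin.le_last k⟩

theorem Icc_ne_univ_iff {J : Fin (n+1) × Fin (n+1)} : Icc J.1 J.2 ≠ univ ↔ J ≠ (0, Fin.last n) := by
  refine not_congr ⟨fun h => ?_, fun h => ?_⟩
  · have h₀ := Finset.mem_Icc.1 (h ▸ Finset.mem_univ (0 : Fin (n+1)))
    have hl := Finset.mem_Icc.1 (h ▸ Finset.mem_univ (Fin.last n))
    exact Prod.ext (le_antisymm h₀.1 (Fin.zero_le _)) (le_antisymm (Fin.le_last _) hl.2)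
  · subst h
    exact Icc_zero_last

end intervals

noncomputable abbrev faceSpan (n : ℕ) (u : Fin (n+1) → ℝ) : Submodule ℝ (Fin (n+1) → ℝ) :=
  edgeSpan (pairIdx n) fun p => argmaxOn u (Icc p.1 p.2)

section faceSpan

variable {n : ℕ}

theorem finrank_faceSpan_of_forall_eq {u : Fin (n+1) → ℝ} (hu : ∀ k l, u k = u l) :
    Module.finrank ℝ (faceSpan n u) = n := by
  have := finrank_edgeSpan_add_card (s := pairIdx n) (S := fun p => argmaxOn u (Icc p.1 p.2))
    (c := fun _ => ()) (fun _ => ⟨0, rfl⟩) (fun _ _ _ _ _ _ => rfl)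
    fun k l _ => ⟨_, inf_sup_mem_pairIdx k l, by
      simp only [argmaxOn_of_forall_eq hu]
      exact ⟨left_mem_Icc_inf_sup k l, right_mem_Icc_inf_sup k l⟩⟩
  rwa [Fintype.card_unit, Nat.add_right_cancel_iff] at this

theorem finrank_faceSpan_facetNormal {J : Fin (n+1) × Fin (n+1)} (hJ : J ∈ pairIdx n)
    (hJ' : Icc J.1 J.2 ≠ univ) :
    Module.finrank ℝ (faceSpan n (facetNormal (Icc J.1 J.2))) + 1 = n := by
  classical
  set T := Icc J.1 J.2
  have hsurj : Function.Surjective fun k => decide (k ∈ T) := by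
    obtain ⟨k, hk⟩ : ∃ k, k ∉ T := by
      by_contra! h
      exact hJ' (Finset.eq_univ_of_forall h)
    obtain ⟨l, hl⟩ := nonempty_Icc_of_mem_pairIdx hJ
    exact fun | true => ⟨l, decide_eq_true hl⟩ | false => ⟨k, decide_eq_false hk⟩
  have hmono : ∀ q ∈ pairIdx n, ∀ k ∈ argmaxOn (facetNormal T) (Icc q.1 q.2),
      ∀ l ∈ argmaxOn (facetNormal T) (Icc q.1 q.2), decide (k ∈ T) = decide (l ∈ T) := by
    intro q _ k hk l hl
    rw [mem_argmaxOn_facetNormal] at hk hl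
    exact decide_eq_decide.2 ⟨fun h => hk.2 h hl.1, fun h => hl.2 h hk.1⟩
  have hconn : ∀ k l, decide (k ∈ T) = decide (l ∈ T) → ∃ q ∈ pairIdx n,
      k ∈ argmaxOn (facetNormal T) (Icc q.1 q.2) ∧ l ∈ argmaxOn (facetNormal T) (Icc q.1 q.2) := by
    intro k l hkl
    rw [decide_eq_decide] at hkl
    have hsub : k ∈ T → Icc (k ⊓ l) (k ⊔ l) ⊆ T := fun hk => by
      have hk' := Finset.mem_Icc.1 hk
      have hl' := Finset.mem_Icc.1 (hkl.1 hk)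
      exact Finset.Icc_subset_Icc (le_inf hk'.1 hl'.1) (sup_le hk'.2 hl'.2)
    refine ⟨_, inf_sup_mem_pairIdx k l, ?_, ?_⟩ <;> rw [mem_argmaxOn_facetNormal]
    · exact ⟨left_mem_Icc_inf_sup k l, hsub⟩
    · exact ⟨right_mem_Icc_inf_sup k l, fun hl => hsub (hkl.2 hl)⟩
  have : Module.finrank ℝ (faceSpan n (facetNormal T)) + Fintype.card Bool = n + 1 :=
    finrank_edgeSpan_add_card hsurj hmono hconn
  rw [Fintype.card_bool] at this
  omega

theorem eq_or_eq_or_eq_of_finrank_faceSpan {u : Fin (n+1) → ℝ}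
    (hu : Module.finrank ℝ (faceSpan n u) + 1 = n) (k l t : Fin (n+1)) :
    u k = u l ∨ u l = u t ∨ u k = u t := by
  by_contra! h
  obtain ⟨hkl, hlt, hkt⟩ := h
  let c : Fin (n+1) → Fin 3 := fun x => if u x = u k then 0 else if u x = u l then 1 else 2
  have hsurj : Function.Surjective c := by
    intro i
    fin_cases i
    · exact ⟨k, by simp [c]⟩
    · exact ⟨l, by simp [c, hkl.symm]⟩
    · exact ⟨t, by simp [c, hkt.symm, hlt.symm]⟩
  have : Module.finrank ℝ (faceSpan n u) + Fintype.card (Fin 3) ≤ n + 1 :=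
    finrank_edgeSpan_add_card_le hsurj fun q _ k' hk' l' hl' => by
      simp only [c, apply_eq_of_mem_argmaxOn hk' hl']
  rw [Fintype.card_fin] at this
  omega

theorem not_lt_of_lt_of_finrank_faceSpan {u : Fin (n+1) → ℝ}
    (hu : Module.finrank ℝ (faceSpan n u) + 1 = n) {b x b' : Fin (n+1)} (hbx : b < x) (hxb : x < b')
    (hb : u b < u x) : ¬ u b' < u x := by
  intro hb'
  let c : Fin (n+1) → Fin 3 := fun y => if u y < u x then (if y < x then 1 else 2) else 0
  have hsurj : Function.Surjective c := by
    intro i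
    fin_cases i
    · exact ⟨x, by simp [c]⟩
    · exact ⟨b, by simp [c, hb, hbx]⟩
    · exact ⟨b', by simp [c, hb', hxb.not_gt]⟩
  have hmono : ∀ q ∈ pairIdx n, ∀ k ∈ argmaxOn u (Icc q.1 q.2), ∀ l ∈ argmaxOn u (Icc q.1 q.2),
      c k = c l := by
    intro q _ k hk l hl
    have hkl := apply_eq_of_mem_argmaxOn hk hl
    by_cases hlow : u l < u x
    · have hx : x ∉ Icc q.1 q.2 := fun hx => ((mem_argmaxOn.1 hl).2 x hx).not_gt hlow
      simp only [c, hkl, hlow, if_true,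
        lt_iff_lt_of_mem_Icc (mem_argmaxOn.1 hk).1 (mem_argmaxOn.1 hl).1 hx]
    · simp only [c, hkl, hlow, if_false]
  have : Module.finrank ℝ (faceSpan n u) + Fintype.card (Fin 3) ≤ n + 1 :=
    finrank_edgeSpan_add_card_le hsurj hmono
  rw [Fintype.card_fin] at this
  omega

end faceSpan

theorem exists_facetNormal_of_finrank_faceSpan {n : ℕ} {u : Fin (n+1) → ℝ}
    (hu : Module.finrank ℝ (faceSpan n u) + 1 = n) :
    ∃ J ∈ pairIdx n, Icc J.1 J.2 ≠ univ ∧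
      ∀ k l, u k ≤ u l ↔ facetNormal (Icc J.1 J.2) k ≤ facetNormal (Icc J.1 J.2) l := by
  classical
  obtain ⟨x, -, hx⟩ := Finset.univ.exists_max_image u Finset.univ_nonempty
  obtain ⟨y, hy⟩ : ∃ y, u y < u x := by
    by_contra! h
    have := finrank_faceSpan_of_forall_eq (n := n) fun k l =>
      (le_antisymm (hx k (mem_univ k)) (h k)).trans (le_antisymm (hx l (mem_univ l)) (h l)).symm
    omega
  set B := univ.filter fun k => u k < u x
  have hB : B.Nonempty := ⟨y, Finset.mem_filter.2 ⟨mem_univ y, hy⟩⟩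
  have hval : ∀ k, u k = if k ∈ B then u y else u x := fun k => by
    by_cases hk : u k < u x
    · rw [if_pos (Finset.mem_filter.2 ⟨mem_univ k, hk⟩)]
      rcases eq_or_eq_or_eq_of_finrank_faceSpan hu k y x with h | h | h
      · exact h
      · exact absurd h hy.ne
      · exact absurd h hk.ne
    · rw [if_neg (show k ∉ B from fun h => hk (Finset.mem_filter.1 h).2)]
      exact le_antisymm (hx k (mem_univ k)) (not_lt.1 hk)
  have hBIcc : B = Icc (B.min' hB) (B.max' hB) := by
    refine subset_antisymm (fun k hk => Finset.mem_Icc.2 ⟨B.min'_le k hk, B.le_max' k hk⟩)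
      fun z hz => ?_
    by_contra hzB
    have hzx : u z = u x := by rw [hval z, if_neg hzB]
    have hlt : ∀ k ∈ B, u k < u z := fun k hk => hzx ▸ (Finset.mem_filter.1 hk).2
    have h₁ : B.min' hB < z :=
      lt_of_le_of_ne (Finset.mem_Icc.1 hz).1 fun h => hzB (h ▸ B.min'_mem hB)
    have h₂ : z < B.max' hB :=
      lt_of_le_of_ne (Finset.mem_Icc.1 hz).2 fun h => hzB (h ▸ B.max'_mem hB)
    exact not_lt_of_lt_of_finrank_faceSpan hu h₁ h₂ (hlt _ (B.min'_mem hB)) (hlt _ (B.max'_mem hB))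
  refine ⟨(B.min' hB, B.max' hB), mem_pairIdx.2 (B.min'_le _ (B.max'_mem hB)), ?_,
    fun k l => ?_⟩
  · rw [← hBIcc]
    exact fun h => (Finset.mem_filter.1 (h ▸ mem_univ x)).2.false
  · simp only [← hBIcc, facetNormal]
    rw [hval k, hval l]
    split_ifs <;> norm_num [hy.le, not_le.2 hy]

section CartesianTree

variable {n : ℕ}

/-- For `g q` the position of the maximum of a generic `w` on the interval `q`, these are the
intervals spanned by the subtrees of the Cartesian (max-)tree of `w`. -/
def IsSubtreeInterval (g : Fin (n+1) × Fin (n+1) → Fin (n+1)) (J : Fin (n+1) × Fin (n+1)) :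
    Prop :=
  ∀ q ∈ pairIdx n, g q ∈ Icc J.1 J.2 → Icc q.1 q.2 ⊆ Icc J.1 J.2

variable {w : Fin (n+1) → ℝ} {g : Fin (n+1) × Fin (n+1) → Fin (n+1)}

theorem eq_iff_of_argmaxOn_eq_singleton (hg : ∀ q ∈ pairIdx n, argmaxOn w (Icc q.1 q.2) = {g q})
    {q : Fin (n+1) × Fin (n+1)} (hq : q ∈ pairIdx n) {t : Fin (n+1)} :
    g q = t ↔ t ∈ Icc q.1 q.2 ∧ ∀ k ∈ Icc q.1 q.2, w k ≤ w t := by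
  rw [← mem_argmaxOn, hg q hq, Finset.mem_singleton, eq_comm]

theorem exists_isSubtreeInterval_eq
    (hg : ∀ q ∈ pairIdx n, argmaxOn w (Icc q.1 q.2) = {g q}) (t : Fin (n+1)) :
    ∃ J ∈ pairIdx n, IsSubtreeInterval g J ∧ g J = t := by
  classical
  set Q := (pairIdx n).filter (g · = t)
  have hQ : ∀ q, q ∈ Q ↔ q ∈ pairIdx n ∧ t ∈ Icc q.1 q.2 ∧ ∀ k ∈ Icc q.1 q.2, w k ≤ w t :=
    fun q => by
      rw [Finset.mem_filter]
      exact and_congr_right fun hq => eq_iff_of_argmaxOn_eq_singleton hg hq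
  have htt : (t, t) ∈ Q := (hQ _).2 ⟨mem_pairIdx.2 le_rfl, Finset.mem_Icc.2 ⟨le_rfl, le_rfl⟩,
    fun k hk => by rw [Finset.Icc_self, Finset.mem_singleton] at hk; rw [hk]⟩
  -- `J` is the largest interval on which `w` is maximal at `t`
  obtain ⟨q₁, hq₁, hmin⟩ := Q.exists_min_image Prod.fst ⟨_, htt⟩
  obtain ⟨q₂, hq₂, hmax⟩ := Q.exists_max_image Prod.snd ⟨_, htt⟩
  obtain ⟨-, ht₁, hw₁⟩ := (hQ q₁).1 hq₁
  obtain ⟨-, ht₂, hw₂⟩ := (hQ q₂).1 hq₂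
  rw [Finset.mem_Icc] at ht₁ ht₂
  set J := (q₁.1, q₂.2)
  have htJ : t ∈ Icc J.1 J.2 := Finset.mem_Icc.2 ⟨ht₁.1, ht₂.2⟩
  have hwJ : ∀ k ∈ Icc J.1 J.2, w k ≤ w t := fun k hk => by
    rw [Finset.mem_Icc] at hk
    rcases le_total k t with hkt | htk
    · exact hw₁ k (Finset.mem_Icc.2 ⟨hk.1, hkt.trans ht₁.2⟩)
    · exact hw₂ k (Finset.mem_Icc.2 ⟨ht₂.1.trans htk, hk.2⟩)
  have hJ : J ∈ Q := (hQ J).2 ⟨mem_pairIdx.2 (ht₁.1.trans ht₂.2), htJ, hwJ⟩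
  refine ⟨J, (Finset.mem_filter.1 hJ).1, fun q hq hgq => ?_, (Finset.mem_filter.1 hJ).2⟩
  -- the hull of `q` and `J` still has its maximum at `t`, so it is no larger than `J`
  obtain ⟨hgq_mem, hgq_max⟩ := (eq_iff_of_argmaxOn_eq_singleton hg hq).1 rfl
  have hwU : ∀ k ∈ Icc (q.1 ⊓ J.1) (q.2 ⊔ J.2), w k ≤ w t := fun k hk => by
    rcases mem_Icc_or_mem_Icc_of_mem_Icc_inf_sup hgq_mem hgq hk with hk | hk
    · exact (hgq_max k hk).trans (hwJ _ hgq)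
    · exact hwJ k hk
  have hU : (q.1 ⊓ J.1, q.2 ⊔ J.2) ∈ Q := (hQ _).2
    ⟨mem_pairIdx.2 (inf_le_left.trans ((mem_pairIdx.1 hq).trans le_sup_left)),
      Finset.mem_Icc.2 ⟨inf_le_right.trans ht₁.1, ht₂.2.trans le_sup_right⟩, hwU⟩
  exact Finset.Icc_subset_Icc (le_inf_iff.1 (hmin _ hU)).1 (sup_le_iff.1 (hmax _ hU)).1

open Classical in
theorem card_filter_isSubtreeInterval
    (hg : ∀ q ∈ pairIdx n, argmaxOn w (Icc q.1 q.2) = {g q}) :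
    ((pairIdx n).filter (IsSubtreeInterval g)).card = n + 1 := by
  have hmem : ∀ q ∈ pairIdx n, g q ∈ Icc q.1 q.2 := fun q hq =>
    ((eq_iff_of_argmaxOn_eq_singleton hg hq).1 rfl).1
  suffices ((pairIdx n).filter (IsSubtreeInterval g)).card = (univ : Finset (Fin (n+1))).card by
    rw [this, Finset.card_univ, Fintype.card_fin]
  refine Finset.card_bij (fun J _ => g J) (fun _ _ => mem_univ _) (fun J hJ J' hJ' h => ?_)
    fun t _ => ?_
  · rw [Finset.mem_filter] at hJ hJ'
    exact eq_of_Icc_eq hJ.1 hJ'.1 (subset_antisymm (hJ'.2 J hJ.1 (h ▸ hmem J' hJ'.1))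
      (hJ.2 J' hJ'.1 (h ▸ hmem J hJ.1)))
  · obtain ⟨J, hJ, hsub, rfl⟩ := exists_isSubtreeInterval_eq hg t
    exact ⟨J, Finset.mem_filter.2 ⟨hJ, hsub⟩, rfl⟩

end CartesianTree

theorem AssIII_eq_simplexSum (n : ℕ) (a : Fin (n+1) × Fin (n+1) → ℝ) :
    AssIII n a = simplexSum (pairIdx n) a fun p => Icc p.1 p.2 := by
  have hseg : ∀ i j : Fin (n+1), stdSimplexSeg n i j = stdSimplexOn (Icc i j) := fun i j => by
    rw [stdSimplexSeg, ← convexHull_eVec_image]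
    congr 1
    ext x
    simp [eq_comm, and_assoc]
  simp only [AssIII, simplexSum, hseg]

namespace AssIII

variable {n : ℕ} {a : Fin (n+1) × Fin (n+1) → ℝ}

theorem pos_of_mem_pairIdx (ha : ∀ p : Fin (n+1) × Fin (n+1), p.1 ≤ p.2 → 0 < a p) :
    ∀ p ∈ pairIdx n, 0 < a p :=
  fun p hp => ha p (mem_pairIdx.1 hp)

theorem maxFace_eq (ha : ∀ p : Fin (n+1) × Fin (n+1), p.1 ≤ p.2 → 0 < a p) (u : Fin (n+1) → ℝ) :
    maxFace (AssIII n a) u = simplexSum (pairIdx n) a fun p => argmaxOn u (Icc p.1 p.2) := by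
  rw [AssIII_eq_simplexSum]
  exact simplexSum.maxFace_eq (pos_of_mem_pairIdx ha) (fun _ => nonempty_Icc_of_mem_pairIdx) u

theorem dimOf_maxFace (ha : ∀ p : Fin (n+1) × Fin (n+1), p.1 ≤ p.2 → 0 < a p)
    (u : Fin (n+1) → ℝ) : dimOf (maxFace (AssIII n a) u) = Module.finrank ℝ (faceSpan n u) := by
  rw [dimOf, maxFace_eq ha, simplexSum.spanDiff_eq (pos_of_mem_pairIdx ha)
    fun p hp => argmaxOn_nonempty u (nonempty_Icc_of_mem_pairIdx hp)]

theorem dimOf_eq (ha : ∀ p : Fin (n+1) × Fin (n+1), p.1 ≤ p.2 → 0 < a p) :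
    dimOf (AssIII n a) = n := by
  have hfull : maxFace (AssIII n a) 0 = AssIII n a :=
    Set.sep_eq_self_iff_mem_true.2 fun _ _ _ _ => by simp [dot]
  rw [← hfull, dimOf_maxFace ha]
  exact finrank_faceSpan_of_forall_eq fun _ _ => rfl

theorem isFacetOf_iff (ha : ∀ p : Fin (n+1) × Fin (n+1), p.1 ≤ p.2 → 0 < a p)
    {F : Set (Fin (n+1) → ℝ)} :
    IsFacetOf (AssIII n a) F ↔ ∃ J ∈ pairIdx n, Icc J.1 J.2 ≠ univ ∧
      F = maxFace (AssIII n a) (facetNormal (Icc J.1 J.2)) := by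
  simp only [IsFacetOf, IsFaceOf, dimOf_eq ha]
  constructor
  · rintro ⟨⟨u, rfl⟩, hdim⟩
    rw [dimOf_maxFace ha] at hdim
    obtain ⟨J, hJ, hJ', horder⟩ := exists_facetNormal_of_finrank_faceSpan hdim
    refine ⟨J, hJ, hJ', ?_⟩
    simp only [maxFace_eq ha, argmaxOn_congr horder]
  · rintro ⟨J, hJ, hJ', rfl⟩
    exact ⟨⟨_, rfl⟩, (dimOf_maxFace ha _).symm ▸ finrank_faceSpan_facetNormal hJ hJ'⟩

theorem facet_injOn (ha : ∀ p : Fin (n+1) × Fin (n+1), p.1 ≤ p.2 → 0 < a p) :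
    Set.InjOn (fun J => maxFace (AssIII n a) (facetNormal (Icc J.1 J.2)))
      {J | J ∈ pairIdx n ∧ Icc J.1 J.2 ≠ univ} := by
  rintro J ⟨hJ, hJ'⟩ J' ⟨hJ₂, hJ₂'⟩ h
  have hfull : ((0 : Fin (n+1)), Fin.last n) ∈ pairIdx n := mem_pairIdx.2 (Fin.zero_le _)
  have hsub := fun (u u' : Fin (n+1) → ℝ) (hF : maxFace (AssIII n a) u ⊆ maxFace (AssIII n a) u') =>
    simplexSum.argmaxOn_subset_of_maxFace_subset (pos_of_mem_pairIdx ha)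
      (fun _ => nonempty_Icc_of_mem_pairIdx) (AssIII_eq_simplexSum n a ▸ hF) hfull
  have hout : ∀ {T : Finset (Fin (n+1))}, T ≠ univ → ∀ k,
      k ∈ argmaxOn (facetNormal T) (Icc 0 (Fin.last n)) ↔ k ∉ T := fun {T} hT k => by
    rw [mem_argmaxOn_facetNormal, Icc_zero_last]
    simp only [mem_univ, true_and, univ_subset_iff, hT, imp_false]
  refine eq_of_Icc_eq hJ hJ₂ (Finset.ext fun k => ?_)
  rw [← not_iff_not, ← hout hJ' k, ← hout hJ₂' k]
  exact ⟨fun hk => hsub _ _ h.le hk, fun hk => hsub _ _ h.ge hk⟩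

theorem exists_eq_vertexPoint (ha : ∀ p : Fin (n+1) × Fin (n+1), p.1 ≤ p.2 → 0 < a p)
    {v : Fin (n+1) → ℝ} (hv : vertexOf (AssIII n a) v) :
    ∃ (w : Fin (n+1) → ℝ) (g : Fin (n+1) × Fin (n+1) → Fin (n+1)),
      (∀ q ∈ pairIdx n, argmaxOn w (Icc q.1 q.2) = {g q}) ∧ v = vertexPoint (pairIdx n) a g := by
  obtain ⟨-, w, hw⟩ := hv
  rw [AssIII_eq_simplexSum] at hw
  have hpos := pos_of_mem_pairIdx ha
  have hne : ∀ q ∈ pairIdx n, ∃ k, k ∈ argmaxOn w (Icc q.1 q.2) := fun q hq =>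
    argmaxOn_nonempty w (nonempty_Icc_of_mem_pairIdx hq)
  choose! g hg using hne
  have hsingle : ∀ q ∈ pairIdx n, argmaxOn w (Icc q.1 q.2) = {g q} := fun q hq =>
    Finset.eq_singleton_iff_unique_mem.2 ⟨hg q hq, fun k hk =>
      simplexSum.argmaxOn_subsingleton_of_maxFace_eq_singleton hpos
        (fun _ => nonempty_Icc_of_mem_pairIdx) hw.symm hq hk (hg q hq)⟩
  refine ⟨w, g, hsingle, ?_⟩
  have hvert := (simplexSum.vertexPoint_mem_maxFace_iff hpos (fun _ => nonempty_Icc_of_mem_pairIdx)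
    fun q hq => argmaxOn_subset w _ (hg q hq)).2 hg
  rw [← hw, Set.mem_singleton_iff] at hvert
  exact hvert.symm

theorem vertexPoint_mem_facet_iff (ha : ∀ p : Fin (n+1) × Fin (n+1), p.1 ≤ p.2 → 0 < a p)
    {g : Fin (n+1) × Fin (n+1) → Fin (n+1)} (hg : ∀ q ∈ pairIdx n, g q ∈ Icc q.1 q.2)
    (J : Fin (n+1) × Fin (n+1)) :
    vertexPoint (pairIdx n) a g ∈ maxFace (AssIII n a) (facetNormal (Icc J.1 J.2)) ↔
      IsSubtreeInterval g J := by
  rw [AssIII_eq_simplexSum, simplexSum.vertexPoint_mem_maxFace_iff (pos_of_mem_pairIdx ha)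
    (fun _ => nonempty_Icc_of_mem_pairIdx) hg]
  exact forall₂_congr fun q hq => mem_argmaxOn_facetNormal.trans (and_iff_right (hg q hq))

open Classical in
theorem facets_through_vertexPoint (ha : ∀ p : Fin (n+1) × Fin (n+1), p.1 ≤ p.2 → 0 < a p)
    {w : Fin (n+1) → ℝ} {g : Fin (n+1) × Fin (n+1) → Fin (n+1)}
    (hg : ∀ q ∈ pairIdx n, argmaxOn w (Icc q.1 q.2) = {g q}) :
    {F | IsFacetOf (AssIII n a) F ∧ vertexPoint (pairIdx n) a g ∈ F} =
      (fun J : Fin (n+1) × Fin (n+1) => maxFace (AssIII n a) (facetNormal (Icc J.1 J.2))) ''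
        ↑(((pairIdx n).filter (IsSubtreeInterval g)).erase (0, Fin.last n)) := by
  have hmem : ∀ q ∈ pairIdx n, g q ∈ Icc q.1 q.2 := fun q hq =>
    ((eq_iff_of_argmaxOn_eq_singleton hg hq).1 rfl).1
  ext F
  simp only [Set.mem_ofPred_eq, isFacetOf_iff ha, Set.mem_image, Finset.coe_erase,
    Finset.coe_filter, Set.mem_sdiff, Set.mem_singleton_iff, ← Icc_ne_univ_iff]
  constructor
  · rintro ⟨⟨J, hJ, hJ', rfl⟩, hv⟩
    exact ⟨J, ⟨⟨hJ, (vertexPoint_mem_facet_iff ha hmem J).1 hv⟩, hJ'⟩, rfl⟩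
  · rintro ⟨J, ⟨⟨hJ, hsub⟩, hJ'⟩, rfl⟩
    exact ⟨⟨J, hJ, hJ', rfl⟩, (vertexPoint_mem_facet_iff ha hmem J).2 hsub⟩

theorem ncard_facets_through_vertexPoint (ha : ∀ p : Fin (n+1) × Fin (n+1), p.1 ≤ p.2 → 0 < a p)
    {w : Fin (n+1) → ℝ} {g : Fin (n+1) × Fin (n+1) → Fin (n+1)}
    (hg : ∀ q ∈ pairIdx n, argmaxOn w (Icc q.1 q.2) = {g q}) :
    {F | IsFacetOf (AssIII n a) F ∧ vertexPoint (pairIdx n) a g ∈ F}.ncard = n := by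
  classical
  have hfull : ((0 : Fin (n+1)), Fin.last n) ∈ (pairIdx n).filter (IsSubtreeInterval g) :=
    Finset.mem_filter.2 ⟨mem_pairIdx.2 (Fin.zero_le _), fun q _ _ => Icc_zero_last ▸ subset_univ _⟩
  rw [facets_through_vertexPoint ha hg, Set.InjOn.ncard_image, Set.ncard_coe_finset,
    Finset.card_erase_of_mem hfull, card_filter_isSubtreeInterval hg, Nat.add_sub_cancel]
  refine (facet_injOn ha).mono fun J hJ => ?_
  obtain ⟨hJ', hJ⟩ := Finset.mem_erase.1 hJ
  exact ⟨(Finset.mem_filter.1 hJ).1, Icc_ne_univ_iff.2 hJ'⟩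

end AssIII

theorem assIII_dim_and_simple_general (n : ℕ)
    (a : Fin (n+1) × Fin (n+1) → ℝ)
    (ha : ∀ p : Fin (n+1) × Fin (n+1), p.1 ≤ p.2 → 0 < a p) :
    (∀ x ∈ AssIII n a, ∑ i, x i = ∑ p ∈ pairIdx n, a p) ∧
    dimOf (AssIII n a) = n ∧
    (∀ v : Fin (n+1) → ℝ, vertexOf (AssIII n a) v →
      {F : Set (Fin (n+1) → ℝ) | IsFacetOf (AssIII n a) F ∧ v ∈ F}.ncard = n) := by
  refine ⟨fun x hx => simplexSum.sum_coords (AssIII_eq_simplexSum n a ▸ hx), AssIII.dimOf_eq ha,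
    fun v hv => ?_⟩
  obtain ⟨w, g, hg, rfl⟩ := AssIII.exists_eq_vertexPoint ha hv
  exact AssIII.ncard_facets_through_vertexPoint ha hg

/-- `Ass_n^{III}(a)` lies in the hyperplane
`{x : ∑ i, x i = ∑ a_{ij}}`, its affine span has dimension exactly `n`, and it
is a simple polytope: every vertex lies on exactly `n` facets. -/
theorem assIII_dim_and_simple (n : ℕ) (hn : 1 ≤ n)
    (a : Fin (n+1) × Fin (n+1) → ℝ)
    (ha : ∀ p : Fin (n+1) × Fin (n+1), p.1 ≤ p.2 → 0 < a p) :
    (∀ x ∈ AssIII n a, ∑ i, x i = ∑ p ∈ pairIdx n, a p) ∧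
    dimOf (AssIII n a) = n ∧
    (∀ v : Fin (n+1) → ℝ, vertexOf (AssIII n a) v →
      {F : Set (Fin (n+1) → ℝ) | IsFacetOf (AssIII n a) F ∧ v ∈ F}.ncard = n) :=
  assIII_dim_and_simple_general n a ha
end
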